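/- arXiv:2603.28168 — 6 statements merged into one kernel-verified Lean document; each statement's English description precedes it below -/
import Mathlib

section
/- For every n × n symmetric matrix L with nonnegative integer entries in which every diagonal entry is even, there exists an n × n matrix A with nonnegative integer entries such that L = A + Aᵀ, and for every row index a, ⌊(∑_b L_{ab})/2⌋ ≤ ∑_b A_{ab} ≤ ⌈(∑_b L_{ab})/2⌉, and for every column index b, ⌊(∑_a L_{ab})/2⌋ ≤ ∑_a A_{ab} ≤ ⌈(∑_a L_{ab})/2⌉. -/
open Matrix

open Finset

private lemma sum_ind_left {n : ℕ} (v w i : Fin n) :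
    (∑ j, if i = v ∧ j = w then (1:ℕ) else 0) = if i = v then 1 else 0 := by
  by_cases h : i = v <;> simp [h]

private lemma sum_ind_right {n : ℕ} (v w j : Fin n) :
    (∑ i, if i = v ∧ j = w then (1:ℕ) else 0) = if j = w then 1 else 0 := by
  by_cases h : j = w <;> simp [h]

private lemma ite_and_comm (p q : Prop) [Decidable p] [Decidable q] :
    (if p ∧ q then (1:ℕ) else 0) = if q ∧ p then 1 else 0 := by
  by_cases hp : p <;> by_cases hq : q <;> simp [hp, hq]

private lemma sum_sub_eq {n : ℕ} (f g : Fin n → ℕ) (h : ∀ j, g j ≤ f j) :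
    (∑ j, (f j - g j)) + ∑ j, g j = ∑ j, f j := by
  rw [← Finset.sum_add_distrib]
  exact Finset.sum_congr rfl fun j _ => by have := h j; omega

private lemma E_lt {n : ℕ} (L M : Matrix (Fin n) (Fin n) ℕ) (hle : ∀ i j, M i j ≤ L i j)
    (i j : Fin n) (hs : M i j < L i j) : (∑ a, ∑ b, M a b) < ∑ a, ∑ b, L a b := by
  apply Finset.sum_lt_sum (fun a _ => Finset.sum_le_sum fun b _ => hle a b)
  exact ⟨i, Finset.mem_univ i, Finset.sum_lt_sum (fun b _ => hle i b) ⟨j, Finset.mem_univ j, hs⟩⟩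

private lemma exists_trail {n : ℕ} (k : ℕ) : ∀ (L : Matrix (Fin n) (Fin n) ℕ),
    (∑ a, ∑ b, L a b) ≤ k →
    (∀ i j, L i j = L j i) → (∀ i j, L i j ≤ 1) → (∀ i, L i i = 0) →
    ∀ v : Fin n, Odd (∑ b, L v b) →
    ∃ D : Matrix (Fin n) (Fin n) ℕ,
      (∀ i j, D i j + D j i ≤ L i j) ∧
      (∑ b, D v b) = (∑ b, D b v) + 1 ∧
      ∃ w, w ≠ v ∧ Odd (∑ b, L w b) ∧ (∑ b, D b w) = (∑ b, D w b) + 1 ∧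
        ∀ i, i ≠ v → i ≠ w → (∑ b, D i b) = (∑ b, D b i) := by
  induction k with
  | zero =>
    intro L hE _ _ _ v hv
    have h1 : ∑ b, L v b ≤ ∑ a, ∑ b, L a b :=
      Finset.single_le_sum (f := fun a => ∑ b, L a b) (fun _ _ => Nat.zero_le _) (Finset.mem_univ v)
    rw [Nat.odd_iff] at hv; omega
  | succ k ih =>
    intro L hE hsym hle hdiag v hv
    have hvpos : 0 < ∑ b, L v b := by rw [Nat.odd_iff] at hv; omega
    have hw : ∃ w, L v w ≠ 0 := by
      by_contra h; push_neg at h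
      rw [Finset.sum_eq_zero (fun b _ => h b)] at hvpos; omega
    obtain ⟨w, hw⟩ := hw
    have hvw : L v w = 1 := by have := hle v w; omega
    have hwv : L w v = 1 := by rw [hsym]; exact hvw
    have hvne : v ≠ w := by
      intro h; rw [h, hdiag] at hvw; omega
    by_cases hOw : Odd (∑ b, L w b)
    · -- single edge v → w suffices
      refine ⟨fun i j => if i = v ∧ j = w then 1 else 0, ?_, ?_, w, Ne.symm hvne, hOw, ?_, ?_⟩
      · intro i j
        by_cases h1 : i = v ∧ j = w
        · obtain ⟨rfl, rfl⟩ := h1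
          simp [hvne, hvw]
        · by_cases h2 : j = v ∧ i = w
          · obtain ⟨rfl, rfl⟩ := h2
            simp [hvne, hwv, h1]
          · simp [h1, h2]
      · dsimp only
        rw [sum_ind_left v w v, sum_ind_right v w v, if_pos rfl, if_neg hvne]
      · dsimp only
        rw [sum_ind_left v w w, sum_ind_right v w w, if_pos rfl, if_neg (Ne.symm hvne)]
      · intro i hiv hiw; dsimp only
        rw [sum_ind_left v w i, sum_ind_right v w i, if_neg hiv, if_neg hiw]
    · -- remove edge {v,w}; w becomes odd in L₁
      obtain ⟨M, hM⟩ : ∃ M : Matrix (Fin n) (Fin n) ℕ, M =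
          fun i j => (if i = v ∧ j = w then 1 else 0) + (if i = w ∧ j = v then 1 else 0) := ⟨_, rfl⟩
      have hMe : ∀ i j, M i j = (if i = v ∧ j = w then 1 else 0) + (if i = w ∧ j = v then 1 else 0) := by
        intro i j; rw [hM]
      have hMvw : M v w = 1 := by
        rw [hMe]
        have h2 : ¬ (v = w ∧ w = v) := fun h => hvne h.1
        simp [h2]
      have hML : ∀ i j, M i j ≤ L i j := by
        intro i j
        rw [hMe]
        by_cases h1 : i = v ∧ j = w
        · obtain ⟨rfl, rfl⟩ := h1
          simp [hvne, hvw]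
        · by_cases h2 : i = w ∧ j = v
          · obtain ⟨rfl, rfl⟩ := h2
            simp [hvne, hwv, h1]
          · simp [h1, h2]
      have hMrow : ∀ i, (∑ j, M i j) = (if i = v then 1 else 0) + (if i = w then 1 else 0) := by
        intro i
        rw [Finset.sum_congr rfl (fun j _ => hMe i j), Finset.sum_add_distrib,
          sum_ind_left v w i, sum_ind_left w v i]
      have hMsym : ∀ i j, M i j = M j i := by
        intro i j
        rw [hMe i j, hMe j i, ite_and_comm (i = v) (j = w), ite_and_comm (i = w) (j = v),
          add_comm]
      obtain ⟨L₁, hL₁⟩ : ∃ L₁ : Matrix (Fin n) (Fin n) ℕ, L₁ = fun i j => L i j - M i j := ⟨_, rfl⟩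
      have hL₁e : ∀ i j, L₁ i j = L i j - M i j := by intro i j; rw [hL₁]
      have hrow1 : ∀ i, (∑ j, L₁ i j) + (∑ j, M i j) = ∑ j, L i j := by
        intro i
        rw [Finset.sum_congr rfl (fun j _ => hL₁e i j)]
        exact sum_sub_eq (L i) (M i) (hML i)
      have hsym1 : ∀ i j, L₁ i j = L₁ j i := by
        intro i j; rw [hL₁e, hL₁e, hsym i j, hMsym i j]
      have hle1 : ∀ i j, L₁ i j ≤ 1 := by
        intro i j; rw [hL₁e]; exact le_trans (Nat.sub_le _ _) (hle i j)
      have hdiag1 : ∀ i, L₁ i i = 0 := by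
        intro i; rw [hL₁e, hdiag i]; omega
      have hE1 : (∑ a, ∑ b, L₁ a b) ≤ k := by
        have hlt : (∑ a, ∑ b, L₁ a b) < ∑ a, ∑ b, L a b := by
          apply E_lt L L₁ (fun i j => (hL₁e i j) ▸ Nat.sub_le _ _) v w
          rw [hL₁e]; omega
        omega
      have hOw1 : Odd (∑ b, L₁ w b) := by
        have h1 := hrow1 w
        have h2 := hMrow w
        have hpos : 0 < ∑ b, L w b :=
          lt_of_lt_of_le (by omega : 0 < L w v)
            (Finset.single_le_sum (f := fun b => L w b) (fun _ _ => Nat.zero_le _) (Finset.mem_univ v))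
        rw [if_neg (Ne.symm hvne), if_pos rfl] at h2
        rw [Nat.odd_iff] at hOw ⊢
        omega
      obtain ⟨D', hD'sub, hD'row, u, huw, hOu, hucol, hbal'⟩ := ih L₁ hE1 hsym1 hle1 hdiag1 w hOw1
      have hD'vw : D' v w = 0 ∧ D' w v = 0 := by
        have h1 := hD'sub v w
        have h2 := hL₁e v w
        omega
      have hDrow : ∀ i, (∑ j, (D' i j + if i = v ∧ j = w then 1 else 0)) =
          (∑ j, D' i j) + (if i = v then 1 else 0) := by
        intro i; rw [Finset.sum_add_distrib, sum_ind_left v w i]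
      have hDcol : ∀ j, (∑ i, (D' i j + if i = v ∧ j = w then 1 else 0)) =
          (∑ i, D' i j) + (if j = w then 1 else 0) := by
        intro j; rw [Finset.sum_add_distrib, sum_ind_right v w j]
      have hsubD : ∀ i j, (D' i j + if i = v ∧ j = w then 1 else 0) +
          (D' j i + if j = v ∧ i = w then 1 else 0) ≤ L i j := by
        intro i j
        have h1 := hD'sub i j
        have h2 := hML i j
        have e : (if j = v ∧ i = w then (1:ℕ) else 0) = (if i = w ∧ j = v then 1 else 0) :=
          ite_and_comm _ _
        rw [e]
        have h3 := hL₁e i j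
        have h4 := hMe i j
        omega
      by_cases huv : u = v
      · -- trail closed back to u : D₀ is balanced, recurse on remainder
        subst huv
        obtain ⟨D₀, hD₀⟩ : ∃ D₀ : Matrix (Fin n) (Fin n) ℕ, D₀ =
            fun i j => D' i j + (if i = u ∧ j = w then 1 else 0) := ⟨_, rfl⟩
        have hD₀e : ∀ i j, D₀ i j = D' i j + (if i = u ∧ j = w then 1 else 0) := by
          intro i j; rw [hD₀]
        have hD₀row : ∀ i, (∑ j, D₀ i j) = (∑ j, D' i j) + (if i = u then 1 else 0) := by
          intro i; rw [Finset.sum_congr rfl (fun j _ => hD₀e i j)]; exact hDrow i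
        have hD₀col : ∀ j, (∑ i, D₀ i j) = (∑ i, D' i j) + (if j = w then 1 else 0) := by
          intro j; rw [Finset.sum_congr rfl (fun i _ => hD₀e i j)]; exact hDcol j
        have hD₀sub : ∀ i j, D₀ i j + D₀ j i ≤ L i j := by
          intro i j; rw [hD₀e, hD₀e]; exact hsubD i j
        have hD₀bal : ∀ i, (∑ j, D₀ i j) = (∑ j, D₀ j i) := by
          intro i
          rw [hD₀row i, hD₀col i]
          by_cases hiv : i = u
          · subst hiv
            rw [if_pos rfl, if_neg hvne]
            have := hucol
            omega
          · by_cases hiw : i = w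
            · subst hiw
              rw [if_neg (Ne.symm hvne), if_pos rfl]
              omega
            · rw [if_neg hiv, if_neg hiw, hbal' i hiw hiv]
        obtain ⟨L₂, hL₂⟩ : ∃ L₂ : Matrix (Fin n) (Fin n) ℕ, L₂ =
            fun i j => L i j - (D₀ i j + D₀ j i) := ⟨_, rfl⟩
        have hL₂e : ∀ i j, L₂ i j = L i j - (D₀ i j + D₀ j i) := by intro i j; rw [hL₂]
        have hsym2 : ∀ i j, L₂ i j = L₂ j i := by
          intro i j; rw [hL₂e, hL₂e, hsym i j]; omega
        have hle2 : ∀ i j, L₂ i j ≤ 1 := by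
          intro i j; rw [hL₂e]; exact le_trans (Nat.sub_le _ _) (hle i j)
        have hdiag2 : ∀ i, L₂ i i = 0 := by
          intro i; rw [hL₂e, hdiag i]; omega
        have hD₀vw : D₀ u w = 1 := by
          rw [hD₀e, hD'vw.1]; simp
        have hE2 : (∑ a, ∑ b, L₂ a b) ≤ k := by
          have hlt : (∑ a, ∑ b, L₂ a b) < ∑ a, ∑ b, L a b := by
            apply E_lt L L₂ (fun i j => (hL₂e i j) ▸ Nat.sub_le _ _) u w
            rw [hL₂e]; omega
          omega
        have hrow2 : ∀ i, (∑ j, L₂ i j) + ((∑ j, D₀ i j) + (∑ j, D₀ j i)) = ∑ j, L i j := by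
          intro i
          rw [Finset.sum_congr rfl (fun j _ => hL₂e i j), ← Finset.sum_add_distrib]
          exact sum_sub_eq (L i) (fun j => D₀ i j + D₀ j i) (hD₀sub i)
        have hOv2 : Odd (∑ b, L₂ u b) := by
          have h1 := hrow2 u
          have h2 := hD₀bal u
          rw [Nat.odd_iff] at hv ⊢
          omega
        obtain ⟨D'', hD''sub, hD''row, w'', hw''u, hOw'', hw''col, hbal''⟩ :=
          ih L₂ hE2 hsym2 hle2 hdiag2 u hOv2
        refine ⟨fun i j => D₀ i j + D'' i j, ?_, ?_, w'', hw''u, ?_, ?_, ?_⟩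
        · intro i j
          have h1 := hD''sub i j
          have h2 := hD₀sub i j
          have h3 := hL₂e i j
          dsimp only
          omega
        · dsimp only
          rw [Finset.sum_add_distrib, Finset.sum_add_distrib, hD₀bal u]
          omega
        · have h1 := hrow2 w''
          have h2 := hD₀bal w''
          rw [Nat.odd_iff] at hOw'' ⊢
          omega
        · dsimp only
          rw [Finset.sum_add_distrib, Finset.sum_add_distrib, hD₀bal w'']
          omega
        · intro i hiv hiw
          dsimp only
          rw [Finset.sum_add_distrib, Finset.sum_add_distrib, hD₀bal i, hbal'' i hiv hiw]
      · -- open trail from v to u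
        refine ⟨fun i j => D' i j + (if i = v ∧ j = w then 1 else 0), hsubD, ?_, u, huv, ?_, ?_, ?_⟩
        · have h1 := hDrow v
          have h2 := hDcol v
          have h3 := hbal' v hvne (fun h => huv h.symm)
          dsimp only
          rw [h1, h2, if_pos rfl, if_neg hvne]
          omega
        · have h1 := hrow1 u
          have h2 := hMrow u
          rw [if_neg huv, if_neg huw] at h2
          rw [Nat.odd_iff] at hOu ⊢
          omega
        · dsimp only
          rw [hDrow u, hDcol u, if_neg huv, if_neg huw]
          omega
        · intro i hiv hiu
          dsimp only
          rw [hDrow i, hDcol i, if_neg hiv]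
          by_cases hiw : i = w
          · subst hiw
            rw [if_pos rfl]
            omega
          · rw [if_neg hiw, hbal' i hiw hiu]

private lemma exists_closed {n : ℕ} (L : Matrix (Fin n) (Fin n) ℕ)
    (hsym : ∀ i j, L i j = L j i) (hle : ∀ i j, L i j ≤ 1) (hdiag : ∀ i, L i i = 0)
    (heven : ∀ i, ¬ Odd (∑ b, L i b)) (a b : Fin n) (hab : L a b = 1) :
    ∃ D : Matrix (Fin n) (Fin n) ℕ,
      (∀ i j, D i j + D j i ≤ L i j) ∧ (∀ i, (∑ j, D i j) = (∑ j, D j i)) ∧ 1 ≤ D b a := by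
  have hba : L b a = 1 := by rw [hsym]; exact hab
  have hne : a ≠ b := by intro h; rw [h, hdiag] at hab; omega
  obtain ⟨M, hM⟩ : ∃ M : Matrix (Fin n) (Fin n) ℕ, M =
      fun i j => (if i = a ∧ j = b then 1 else 0) + (if i = b ∧ j = a then 1 else 0) := ⟨_, rfl⟩
  have hMe : ∀ i j, M i j = (if i = a ∧ j = b then 1 else 0) + (if i = b ∧ j = a then 1 else 0) := by
    intro i j; rw [hM]
  have hML : ∀ i j, M i j ≤ L i j := by
    intro i j
    rw [hMe]
    by_cases h1 : i = a ∧ j = b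
    · obtain ⟨rfl, rfl⟩ := h1
      simp [hne, hab]
    · by_cases h2 : i = b ∧ j = a
      · obtain ⟨rfl, rfl⟩ := h2
        simp [hne, hba, h1]
      · simp [h1, h2]
  have hMrow : ∀ i, (∑ j, M i j) = (if i = a then 1 else 0) + (if i = b then 1 else 0) := by
    intro i
    rw [Finset.sum_congr rfl (fun j _ => hMe i j), Finset.sum_add_distrib,
      sum_ind_left a b i, sum_ind_left b a i]
  have hMsym : ∀ i j, M i j = M j i := by
    intro i j
    rw [hMe i j, hMe j i, ite_and_comm (i = a) (j = b), ite_and_comm (i = b) (j = a), add_comm]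
  obtain ⟨L₁, hL₁⟩ : ∃ L₁ : Matrix (Fin n) (Fin n) ℕ, L₁ = fun i j => L i j - M i j := ⟨_, rfl⟩
  have hL₁e : ∀ i j, L₁ i j = L i j - M i j := by intro i j; rw [hL₁]
  have hrow1 : ∀ i, (∑ j, L₁ i j) + (∑ j, M i j) = ∑ j, L i j := by
    intro i
    rw [Finset.sum_congr rfl (fun j _ => hL₁e i j)]
    exact sum_sub_eq (L i) (M i) (hML i)
  have hsym1 : ∀ i j, L₁ i j = L₁ j i := by
    intro i j; rw [hL₁e, hL₁e, hsym i j, hMsym i j]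
  have hle1 : ∀ i j, L₁ i j ≤ 1 := by
    intro i j; rw [hL₁e]; exact le_trans (Nat.sub_le _ _) (hle i j)
  have hdiag1 : ∀ i, L₁ i i = 0 := by
    intro i; rw [hL₁e, hdiag i]; omega
  have hOa1 : Odd (∑ c, L₁ a c) := by
    have h1 := hrow1 a
    have h2 := hMrow a
    have hpos : 0 < ∑ c, L a c :=
      lt_of_lt_of_le (by omega : 0 < L a b)
        (Finset.single_le_sum (f := fun c => L a c) (fun _ _ => Nat.zero_le _) (Finset.mem_univ b))
    rw [if_pos rfl, if_neg hne] at h2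
    have h3 := heven a
    rw [Nat.odd_iff] at h3 ⊢
    omega
  obtain ⟨D', hD'sub, hD'row, u, hua, hOu, hucol, hbal'⟩ :=
    exists_trail (∑ x, ∑ y, L₁ x y) L₁ le_rfl hsym1 hle1 hdiag1 a hOa1
  have hub : u = b := by
    by_contra hub
    have h1 := hrow1 u
    have h2 := hMrow u
    rw [if_neg hua, if_neg hub] at h2
    have h3 := heven u
    rw [Nat.odd_iff] at h3 hOu
    omega
  subst hub
  refine ⟨fun i j => D' i j + (if i = u ∧ j = a then 1 else 0), ?_, ?_, ?_⟩
  · intro i j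
    have h1 := hD'sub i j
    have h2 := hML i j
    have e : (if j = u ∧ i = a then (1:ℕ) else 0) = (if i = a ∧ j = u then 1 else 0) :=
      ite_and_comm _ _
    dsimp only
    rw [e]
    have h3 := hL₁e i j
    have h4 := hMe i j
    omega
  · intro i
    dsimp only
    rw [Finset.sum_add_distrib, Finset.sum_add_distrib, sum_ind_left u a i, sum_ind_right u a i]
    by_cases hia : i = a
    · rw [hia, if_neg (fun h : a = u => hua h.symm), if_pos rfl]
      omega
    · by_cases hiu : i = u
      · rw [hiu, if_pos rfl, if_neg (fun h : u = a => hua h)]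
        omega
      · rw [if_neg hiu, if_neg hia, hbal' i hia hiu]
  · dsimp only
    simp

private lemma main_decomp {n : ℕ} (k : ℕ) : ∀ (L : Matrix (Fin n) (Fin n) ℕ),
    (∑ a, ∑ b, L a b) ≤ k →
    (∀ i j, L i j = L j i) → (∀ i, Even (L i i)) →
    ∃ A : Matrix (Fin n) (Fin n) ℕ,
      (∀ i j, L i j = A i j + A j i) ∧
      ∀ a, (∑ b, L a b) / 2 ≤ (∑ b, A a b) ∧ (∑ b, A a b) ≤ ((∑ b, L a b) + 1) / 2 := by
  induction k with
  | zero =>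
    intro L hE hsym hdiag
    have hz : ∀ i j, L i j = 0 := by
      intro i j
      have h1 : ∑ b, L i b ≤ ∑ a, ∑ b, L a b :=
        Finset.single_le_sum (f := fun a => ∑ b, L a b) (fun _ _ => Nat.zero_le _) (Finset.mem_univ i)
      have h2 : L i j ≤ ∑ b, L i b :=
        Finset.single_le_sum (f := fun b => L i b) (fun _ _ => Nat.zero_le _) (Finset.mem_univ j)
      omega
    refine ⟨0, fun i j => by simp [hz i j], fun a => ?_⟩
    have h0 : ∑ b, L a b = 0 := Finset.sum_eq_zero fun b _ => hz a b
    have hA : ∑ b, (0 : Matrix (Fin n) (Fin n) ℕ) a b = 0 := by simp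
    omega
  | succ k ih =>
    intro L hE hsym hdiag
    by_cases hz : ∀ i j, L i j = 0
    · refine ⟨0, fun i j => by simp [hz i j], fun a => ?_⟩
      have h0 : ∑ b, L a b = 0 := Finset.sum_eq_zero fun b _ => hz a b
      have hA : ∑ b, (0 : Matrix (Fin n) (Fin n) ℕ) a b = 0 := by simp
      omega
    push_neg at hz
    obtain ⟨a₀, b₀, hz⟩ := hz
    have hD : ∃ D : Matrix (Fin n) (Fin n) ℕ,
        (∀ i j, D i j + D j i ≤ L i j) ∧ (∃ i j, 1 ≤ D i j) ∧
        ∀ i, (∑ b, D i b) = (∑ b, D b i) ∨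
          (Odd (∑ b, L i b) ∧
            ((∑ b, D i b) = (∑ b, D b i) + 1 ∨ (∑ b, D b i) = (∑ b, D i b) + 1)) := by
      by_cases h1 : ∃ a, L a a ≠ 0
      · obtain ⟨a, ha⟩ := h1
        have ha2 : 2 ≤ L a a := by have := hdiag a; rw [Nat.even_iff] at this; omega
        refine ⟨fun i j => if i = a ∧ j = a then 1 else 0, ?_, ⟨a, a, by simp⟩, ?_⟩
        · intro i j
          dsimp only
          by_cases hij : i = a ∧ j = a
          · have hji : j = a ∧ i = a := ⟨hij.2, hij.1⟩
            rw [if_pos hij, if_pos hji, hij.1, hij.2]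
            omega
          · have hji : ¬ (j = a ∧ i = a) := fun h => hij ⟨h.2, h.1⟩
            rw [if_neg hij, if_neg hji]
            omega
        · intro i
          left
          rw [sum_ind_left a a i, sum_ind_right a a i]
      · by_cases h2 : ∃ a b, 2 ≤ L a b
        · obtain ⟨a, b, hab⟩ := h2
          push_neg at h1
          have hne : a ≠ b := by intro h; have := h1 b; rw [h] at hab; omega
          refine ⟨fun i j => (if i = a ∧ j = b then 1 else 0) + (if i = b ∧ j = a then 1 else 0),
            ?_, ⟨a, b, by simp [hne]⟩, ?_⟩
          · intro i j
            dsimp only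
            by_cases hab' : i = a ∧ j = b
            · obtain ⟨ha', hb'⟩ := hab'
              rw [if_pos ⟨ha', hb'⟩, if_neg (fun h => hne (ha'.symm.trans h.1)),
                if_neg (fun h => hne (ha'.symm.trans h.2)), if_pos ⟨hb', ha'⟩, ha', hb']
              omega
            · by_cases hba' : i = b ∧ j = a
              · obtain ⟨hb', ha'⟩ := hba'
                have hLL : L i j = L a b := by rw [hb', ha', hsym]
                rw [if_neg (fun h => hne (h.1.symm.trans hb')), if_pos ⟨hb', ha'⟩,
                  if_pos ⟨ha', hb'⟩, if_neg (fun h => hne (h.2.symm.trans hb')), hLL]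
                omega
              · rw [if_neg hab', if_neg hba', if_neg (fun h => hba' ⟨h.2, h.1⟩),
                  if_neg (fun h => hab' ⟨h.2, h.1⟩)]
                omega
          · intro i
            left
            dsimp only
            rw [Finset.sum_add_distrib, Finset.sum_add_distrib, sum_ind_left a b i,
              sum_ind_left b a i, sum_ind_right a b i, sum_ind_right b a i]
            omega
        · push_neg at h1 h2
          have hle1 : ∀ i j, L i j ≤ 1 := fun i j => by have := h2 i j; omega
          by_cases h3 : ∃ v, Odd (∑ b, L v b)
          · obtain ⟨v, hv⟩ := h3
            obtain ⟨D, hsub, hrowv, w, hwv, hOw, hcolw, hbal⟩ :=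
              exists_trail (∑ a, ∑ b, L a b) L le_rfl hsym hle1 h1 v hv
            refine ⟨D, hsub, ?_, ?_⟩
            · by_contra h
              push_neg at h
              have h0 : ∑ b, D v b = 0 := Finset.sum_eq_zero fun b _ => by have := h v b; omega
              omega
            · intro i
              by_cases hiv : i = v
              · rw [hiv]; right; exact ⟨hv, Or.inl hrowv⟩
              · by_cases hiw : i = w
                · rw [hiw]; right; exact ⟨hOw, Or.inr hcolw⟩
                · left; exact hbal i hiv hiw
          · push_neg at h3
            have hab : L a₀ b₀ = 1 := by have := hle1 a₀ b₀; omega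
            obtain ⟨D, hsub, hbal, hD₀⟩ := exists_closed L hsym hle1 h1 h3 a₀ b₀ hab
            exact ⟨D, hsub, ⟨b₀, a₀, hD₀⟩, fun i => Or.inl (hbal i)⟩
    obtain ⟨D, hsub, ⟨i₀, j₀, hD₀⟩, hbal⟩ := hD
    obtain ⟨L', hL'⟩ : ∃ L' : Matrix (Fin n) (Fin n) ℕ,
        L' = fun i j => L i j - (D i j + D j i) := ⟨_, rfl⟩
    have hL'e : ∀ i j, L' i j = L i j - (D i j + D j i) := fun i j => by rw [hL']
    have hsym' : ∀ i j, L' i j = L' j i := by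
      intro i j; rw [hL'e, hL'e, hsym i j]; omega
    have hdiag' : ∀ i, Even (L' i i) := by
      intro i
      have h1 := hdiag i
      have h2 := hsub i i
      rw [Nat.even_iff] at h1 ⊢
      rw [hL'e]
      omega
    have hE' : ∑ a, ∑ b, L' a b ≤ k := by
      have hlt := E_lt L L' (fun i j => (hL'e i j) ▸ Nat.sub_le _ _) i₀ j₀
        (by rw [hL'e]; have := hsub i₀ j₀; omega)
      omega
    obtain ⟨A', hA'e, hA'row⟩ := ih L' hE' hsym' hdiag'
    refine ⟨fun i j => A' i j + D i j, ?_, ?_⟩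
    · intro i j
      have h1 := hA'e i j
      have h2 := hL'e i j
      have h3 := hsub i j
      dsimp only
      omega
    · intro a
      have hrow' : (∑ b, L' a b) + ((∑ b, D a b) + (∑ b, D b a)) = ∑ b, L a b := by
        rw [Finset.sum_congr rfl (fun j _ => hL'e a j), ← Finset.sum_add_distrib]
        exact sum_sub_eq (L a) (fun j => D a j + D j a) (hsub a)
      have h1 := (hA'row a).1
      have h2 := (hA'row a).2
      dsimp only
      rw [Finset.sum_add_distrib]
      rcases hbal a with hb | ⟨hodd, hb⟩
      · omega
      · rw [Nat.odd_iff] at hodd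
        rcases hb with hb | hb <;> omega

/-- Symmetric Matrix Decomposition Theorem (Theorem 2). -/
theorem symmetric_matrix_decomposition (n : ℕ) (L : Matrix (Fin n) (Fin n) ℕ)
    (hsym : ∀ a b, L a b = L b a) (hdiag : ∀ a, Even (L a a)) :
    ∃ A : Matrix (Fin n) (Fin n) ℕ,
      L = A + Aᵀ ∧
      (∀ a, (∑ b, L a b) / 2 ≤ ∑ b, A a b ∧ ∑ b, A a b ≤ ((∑ b, L a b) + 2 - 1) / 2) ∧
      (∀ b, (∑ a, L a b) / 2 ≤ ∑ a, A a b ∧ ∑ a, A a b ≤ ((∑ a, L a b) + 2 - 1) / 2) := by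
  obtain ⟨A, hAe, hrow⟩ := main_decomp (∑ a, ∑ b, L a b) L le_rfl hsym hdiag
  refine ⟨A, ?_, ?_, ?_⟩
  · funext i j
    rw [Matrix.add_apply, Matrix.transpose_apply]
    exact hAe i j
  · intro a
    have h := hrow a
    omega
  · intro b
    have hcolL : ∑ a, L a b = ∑ a, L b a := Finset.sum_congr rfl fun a _ => hsym a b
    have hsum : ∑ a, L b a = (∑ a, A b a) + (∑ a, A a b) := by
      rw [← Finset.sum_add_distrib]
      exact Finset.sum_congr rfl fun a _ => hAe b a
    have h := hrow b
    omega
end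

section
/- For every I × J matrix A with nonnegative integer entries and every positive natural number H, there exist H matrices A^(1), …, A^(H) with nonnegative integer entries such that A = A^(1) + A^(2) + ⋯ + A^(H), and for all indices a ∈ {1,…,I}, b ∈ {1,…,J} and all h ∈ {1,…,H}: ⌊A_{ab}/H⌋ ≤ A^(h)_{ab} ≤ ⌈A_{ab}/H⌉, ⌊(∑_a A_{ab})/H⌋ ≤ ∑_a A^(h)_{ab} ≤ ⌈(∑_a A_{ab})/H⌉, and ⌊(∑_b A_{ab})/H⌋ ≤ ∑_b A^(h)_{ab} ≤ ⌈(∑_b A_{ab})/H⌉. -/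
namespace IMD


/-- Sum of indicators of a "at most one witness" predicate is ≤ 1. -/
lemma sum_ite_le_one {α : Type*} [Fintype α] (p : α → Prop) [DecidablePred p]
    (h : ∀ x y, p x → p y → x = y) :
    (∑ x, if p x then 1 else 0 : ℕ) ≤ 1 := by
  classical
  rw [Finset.sum_boole]
  rw [Nat.cast_id, Finset.card_le_one]
  intro a ha b hb
  simp only [Finset.mem_filter] at ha hb
  exact h a b ha.2 hb.2

/-- A square ℕ-matrix with all row and column sums equal to K is a sum of K
permutation matrices. -/
lemma perm_decomp {V : Type*} [Fintype V] [DecidableEq V] :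
    ∀ (K : ℕ) (N : V → V → ℕ), (∀ i, ∑ j, N i j = K) → (∀ j, ∑ i, N i j = K) →
    ∃ σ : Fin K → Equiv.Perm V, ∀ i j, N i j = ∑ k, if σ k i = j then 1 else 0 := by
  intro K
  induction K with
  | zero =>
    intro N hrow _
    refine ⟨Fin.elim0, fun i j => ?_⟩
    have := hrow i
    have hij : N i j = 0 := by
      have : N i j ≤ ∑ j, N i j := Finset.single_le_sum (fun _ _ => Nat.zero_le _) (Finset.mem_univ j)
      omega
    simp [hij]
  | succ K ih =>
    intro N hrow hcol
    -- Hall's condition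
    classical
    set t : V → Finset V := fun i => Finset.univ.filter (fun j => 0 < N i j) with ht
    have hall : ∀ s : Finset V, s.card ≤ (s.biUnion t).card := by
      intro s
      have h1 : (K+1) * s.card ≤ (K+1) * (s.biUnion t).card := by
        calc (K+1) * s.card = ∑ i ∈ s, (K+1) := by rw [Finset.sum_const]; ring
        _ = ∑ i ∈ s, ∑ j, N i j := by
            apply Finset.sum_congr rfl; intro i _; rw [hrow i]
        _ = ∑ i ∈ s, ∑ j ∈ t i, N i j := by
            apply Finset.sum_congr rfl; intro i _
            symm
            apply Finset.sum_subset (Finset.filter_subset _ _)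
            intro j _ hj
            simp [ht] at hj
            omega
        _ ≤ ∑ i ∈ s, ∑ j ∈ s.biUnion t, N i j := by
            apply Finset.sum_le_sum
            intro i hi
            apply Finset.sum_le_sum_of_subset
            intro j hj
            exact Finset.mem_biUnion.2 ⟨i, hi, hj⟩
        _ = ∑ j ∈ s.biUnion t, ∑ i ∈ s, N i j := Finset.sum_comm
        _ ≤ ∑ j ∈ s.biUnion t, ∑ i, N i j := by
            apply Finset.sum_le_sum
            intro j _
            exact Finset.sum_le_sum_of_subset (Finset.subset_univ s)
        _ = ∑ j ∈ s.biUnion t, (K+1) := by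
            apply Finset.sum_congr rfl; intro j _; rw [hcol j]
        _ = (K+1) * (s.biUnion t).card := by rw [Finset.sum_const]; ring
      exact Nat.le_of_mul_le_mul_left h1 (Nat.succ_pos K)
    obtain ⟨f, hfinj, hf⟩ := (Finset.all_card_le_biUnion_card_iff_exists_injective t).1 hall
    have hfbij : Function.Bijective f := (Finite.injective_iff_bijective).1 hfinj
    set e : Equiv.Perm V := Equiv.ofBijective f hfbij with he
    have hepos : ∀ i, 0 < N i (e i) := by
      intro i
      have := hf i
      simp [ht] at this
      exact this
    set N' : V → V → ℕ := fun i j => N i j - (if e i = j then 1 else 0) with hN'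
    have hkey : ∀ i j, N' i j + (if e i = j then 1 else 0) = N i j := by
      intro i j
      by_cases h : e i = j
      · have := hepos i; rw [h] at this; simp [hN', h]; omega
      · simp [hN', h]
    have hrow' : ∀ i, ∑ j, N' i j = K := by
      intro i
      have h1 : ∑ j, (N' i j + (if e i = j then 1 else 0)) = K + 1 := by
        rw [Finset.sum_congr rfl (fun j _ => hkey i j), hrow i]
      rw [Finset.sum_add_distrib] at h1
      have h2 : (∑ j, if e i = j then 1 else 0 : ℕ) = 1 := by
        simp [Finset.sum_ite_eq]
      omega
    have hcol' : ∀ j, ∑ i, N' i j = K := by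
      intro j
      have h1 : ∑ i, (N' i j + (if e i = j then 1 else 0)) = K + 1 := by
        rw [Finset.sum_congr rfl (fun i _ => hkey i j), hcol j]
      rw [Finset.sum_add_distrib] at h1
      have h2 : (∑ i, if e i = j then 1 else 0 : ℕ) = 1 := by
        have : ∀ i, (e i = j) ↔ (i = e.symm j) := by
          intro i; constructor
          · intro h; rw [← h]; simp
          · intro h; rw [h]; simp
        simp only [this]
        simp [Finset.sum_ite_eq']
      omega
    obtain ⟨σ', hσ'⟩ := ih N' hrow' hcol'
    refine ⟨Fin.cons e σ', fun i j => ?_⟩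
    rw [Fin.sum_univ_succ]
    simp only [Fin.cons_zero, Fin.cons_succ]
    rw [← hσ' i j]
    have := hkey i j
    omega



/-- length of the overlap `[s, s+t) ∩ [p, p+l)`. -/
def ov (s t p l : ℕ) : ℕ := min (s + t) (p + l) - max s p

lemma ov_le_t (s t p l : ℕ) : ov s t p l ≤ t := by unfold ov; omega
lemma ov_le_l (s t p l : ℕ) : ov s t p l ≤ l := by unfold ov; omega
lemma ov_add_right (s t p l1 l2 : ℕ) :
    ov s t p (l1 + l2) = ov s t p l1 + ov s t (p + l1) l2 := by unfold ov; omega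
lemma ov_add_left (s t1 t2 p l : ℕ) :
    ov s (t1 + t2) p l = ov s t1 p l + ov (s + t1) t2 p l := by unfold ov; omega
lemma ov_full (n p l : ℕ) (h : p + l ≤ n) : ov 0 n p l = l := by unfold ov; omega
lemma ov_block (k H m : ℕ) : ov (k*H) H 0 m = min (k*H + H) m - k*H := by unfold ov; omega

/-- partition of the target interval along prefix sums -/
lemma sum_ov_prefix (f : ℕ → ℕ) (s t : ℕ) :
    ∀ n, ∑ b ∈ Finset.range n, ov s t (∑ i ∈ Finset.range b, f i) (f b)
      = ov s t 0 (∑ i ∈ Finset.range n, f i) := by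
  intro n
  induction n with
  | zero => simp [ov]
  | succ n ih =>
    rw [Finset.sum_range_succ, Finset.sum_range_succ, ov_add_right, ← ih]
    simp

/-- partition of the source interval into consecutive blocks of length H -/
lemma sum_ov_blocks (H p l : ℕ) :
    ∀ n, ∑ k ∈ Finset.range n, ov (k*H) H p l = ov 0 (n*H) p l := by
  intro n
  induction n with
  | zero => simp [ov]
  | succ n ih =>
    rw [Finset.sum_range_succ, Nat.succ_mul, ov_add_left, ih, Nat.zero_add]

lemma tele_floor (H m : ℕ) (hH : 0 < H) :
    ∀ n, (∑ k ∈ Finset.range n, if (k+1)*H ≤ m then 1 else 0) = min (n*H) m / H := by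
  intro n
  induction n with
  | zero => simp
  | succ n ih =>
    rw [Finset.sum_range_succ, ih]
    have hmul : (n+1)*H = n*H + H := by ring
    by_cases h : (n+1)*H ≤ m
    · simp only [h, if_true]
      have e1 : min ((n+1)*H) m = (n+1)*H := by omega
      have e2 : min (n*H) m = n*H := by omega
      rw [e1, e2, Nat.mul_div_cancel _ hH, Nat.mul_div_cancel _ hH]
    · simp only [h, if_false, Nat.add_zero]
      by_cases h2 : n*H ≤ m
      · have e1 : min ((n+1)*H) m = m := by omega
        have e2 : min (n*H) m = n*H := by omega
        rw [e1, e2, Nat.mul_div_cancel _ hH]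
        symm
        apply Nat.div_eq_of_lt_le
        · omega
        · calc m < n*H + H := by omega
          _ = (n+1)*H := by ring
      · have e1 : min ((n+1)*H) m = m := by omega
        have e2 : min (n*H) m = m := by omega
        rw [e1, e2]

lemma tele_ceil (H m : ℕ) (hH : 0 < H) :
    ∀ n, (∑ k ∈ Finset.range n, if k*H < m then 1 else 0) = (min (n*H) m + H - 1) / H := by
  intro n
  induction n with
  | zero => simp [Nat.div_eq_of_lt (show H - 1 < H by omega)]
  | succ n ih =>
    rw [Finset.sum_range_succ, ih]
    have hmul : (n+1)*H = n*H + H := by ring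
    by_cases h : n*H < m
    · simp only [h, if_true]
      by_cases h2 : (n+1)*H ≤ m
      · have e1 : min ((n+1)*H) m = (n+1)*H := by omega
        have e2 : min (n*H) m = n*H := by omega
        rw [e1, e2]
        have d1 : (n*H + H - 1)/H = n := by
          apply Nat.div_eq_of_lt_le
          · calc n * H ≤ n*H + (H-1) := by omega
            _ = n*H + H - 1 := by omega
          · calc n*H + H - 1 < n*H + H := by omega
            _ = (n+1)*H := by ring
        have d2 : ((n+1)*H + H - 1)/H = n+1 := by
          apply Nat.div_eq_of_lt_le
          · calc (n+1) * H ≤ (n+1)*H + (H-1) := by omega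
            _ = (n+1)*H + H - 1 := by omega
          · calc (n+1)*H + H - 1 < (n+1)*H + H := by omega
            _ = (n+1+1)*H := by ring
        omega
      · have e1 : min ((n+1)*H) m = m := by omega
        have e2 : min (n*H) m = n*H := by omega
        rw [e1, e2]
        have d1 : (n*H + H - 1)/H = n := by
          apply Nat.div_eq_of_lt_le
          · omega
          · calc n*H + H - 1 < n*H + H := by omega
            _ = (n+1)*H := by ring
        have d2 : (m + H - 1)/H = n+1 := by
          apply Nat.div_eq_of_lt_le
          · calc (n+1) * H = n*H + H := by ring
            _ ≤ m + H - 1 := by omega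
          · calc m + H - 1 < (n+1)*H + H := by omega
            _ = (n+1+1)*H := by ring
        omega
    · simp only [h, if_false, Nat.add_zero]
      have e1 : min ((n+1)*H) m = m := by omega
      have e2 : min (n*H) m = m := by omega
      rw [e1, e2]



section Gadget

variable (I J H : ℕ) (A : Matrix (Fin I) (Fin J) ℕ)

/-- remainder of entry, as function of a natural column index -/
def rr (a : Fin I) (b : ℕ) : ℕ := if h : b < J then A a ⟨b, h⟩ % H else 0

/-- remainder of entry, as function of a natural row index -/
def cc (b : Fin J) (a : ℕ) : ℕ := if h : a < I then A ⟨a, h⟩ b % H else 0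

lemma rr_lt (hH : 0 < H) (a : Fin I) (n : ℕ) : rr I J H A a n < H := by
  unfold rr; split
  · exact Nat.mod_lt _ hH
  · exact hH

lemma cc_lt (hH : 0 < H) (b : Fin J) (n : ℕ) : cc I J H A b n < H := by
  unfold cc; split
  · exact Nat.mod_lt _ hH
  · exact hH

lemma rr_fin (a : Fin I) (b : Fin J) : rr I J H A a ↑b = A a b % H := by simp [rr]

lemma cc_fin (a : Fin I) (b : Fin J) : cc I J H A b ↑a = A a b % H := by simp [cc]

/-- prefix sums along a row -/
def Pf (a : Fin I) (n : ℕ) : ℕ := ∑ i ∈ Finset.range n, rr I J H A a i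

/-- prefix sums along a column -/
def Qf (b : Fin J) (n : ℕ) : ℕ := ∑ i ∈ Finset.range n, cc I J H A b i

lemma Pf_le (hH : 0 < H) (a : Fin I) (n : ℕ) : Pf I J H A a n ≤ n * H := by
  unfold Pf
  calc ∑ i ∈ Finset.range n, rr I J H A a i ≤ ∑ i ∈ Finset.range n, H :=
    Finset.sum_le_sum (fun i _ => le_of_lt (rr_lt I J H A hH a i))
  _ = n * H := by rw [Finset.sum_const, Finset.card_range, smul_eq_mul]

lemma Qf_le (hH : 0 < H) (b : Fin J) (n : ℕ) : Qf I J H A b n ≤ n * H := by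
  unfold Qf
  calc ∑ i ∈ Finset.range n, cc I J H A b i ≤ ∑ i ∈ Finset.range n, H :=
    Finset.sum_le_sum (fun i _ => le_of_lt (cc_lt I J H A hH b i))
  _ = n * H := by rw [Finset.sum_const, Finset.card_range, smul_eq_mul]

lemma Pf_mono (a : Fin I) {n m : ℕ} (h : n ≤ m) : Pf I J H A a n ≤ Pf I J H A a m := by
  unfold Pf
  exact Finset.sum_le_sum_of_subset (Finset.range_subset_range.2 h)

lemma Qf_mono (b : Fin J) {n m : ℕ} (h : n ≤ m) : Qf I J H A b n ≤ Qf I J H A b m := by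
  unfold Qf
  exact Finset.sum_le_sum_of_subset (Finset.range_subset_range.2 h)

lemma Pf_bound (a : Fin I) (b : Fin J) :
    Pf I J H A a ↑b + rr I J H A a ↑b ≤ Pf I J H A a J := by
  have h1 : Pf I J H A a (↑b + 1) = Pf I J H A a ↑b + rr I J H A a ↑b := by
    unfold Pf; rw [Finset.sum_range_succ]
  rw [← h1]
  exact Pf_mono I J H A a b.2

lemma Qf_bound (a : Fin I) (b : Fin J) :
    Qf I J H A b ↑a + cc I J H A b ↑a ≤ Qf I J H A b I := by
  have h1 : Qf I J H A b (↑a + 1) = Qf I J H A b ↑a + cc I J H A b ↑a := by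
    unfold Qf; rw [Finset.sum_range_succ]
  rw [← h1]
  exact Qf_mono I J H A b a.2

/-- Left vertices: row-copies `(a,k)` and entry gadgets `w (a,b)`. -/
abbrev LL := (Fin I × Fin J) ⊕ (Fin I × Fin J)
/-- Right vertices: entry gadgets `u (a,b)` and column-copies `(b,k)`. -/
abbrev RR := (Fin I × Fin J) ⊕ (Fin J × Fin I)
abbrev VV := LL I J ⊕ RR I J

/-- bipartite weights -/
def Bm : LL I J → RR I J → ℕ := fun l r => match l, r with
  | .inl (a, k), .inl (a', b) =>
      if a' = a then ov ((k : ℕ) * H) H (Pf I J H A a ↑b) (rr I J H A a ↑b) else 0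
  | .inl _, .inr _ => 0
  | .inr (a, b), .inl (a', b') => if (a', b') = (a, b) then H - rr I J H A a ↑b else 0
  | .inr (a, b), .inr (b', k) =>
      if b' = b then ov ((k : ℕ) * H) H (Qf I J H A b ↑a) (cc I J H A b ↑a) else 0

def dL (l : LL I J) : ℕ := ∑ y : RR I J, Bm I J H A l y
def dR (r : RR I J) : ℕ := ∑ x : LL I J, Bm I J H A x r

lemma dL_copy (a : Fin I) (k : Fin J) :
    dL I J H A (.inl (a, k)) = ov ((k : ℕ) * H) H 0 (Pf I J H A a J) := by
  unfold dL
  rw [Fintype.sum_sum_type]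
  have h2 : ∑ x : Fin J × Fin I, Bm I J H A (.inl (a, k)) (.inr x) = 0 := by
    apply Finset.sum_eq_zero; rintro ⟨b', k'⟩ _; rfl
  rw [h2, Nat.add_zero, Fintype.sum_prod_type_right]
  have h3 : ∀ b : Fin J,
      (∑ a' : Fin I, Bm I J H A (.inl (a, k)) (.inl (a', b)))
        = ov ((k : ℕ) * H) H (Pf I J H A a ↑b) (rr I J H A a ↑b) := by
    intro b
    simp only [Bm]
    rw [Finset.sum_ite_eq']
    simp
  rw [Finset.sum_congr rfl (fun b _ => h3 b)]
  rw [Fin.sum_univ_eq_sum_range (fun n => ov ((k : ℕ) * H) H (Pf I J H A a n) (rr I J H A a n)) J]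
  unfold Pf
  exact sum_ov_prefix (rr I J H A a) ((k : ℕ) * H) H J

lemma dL_w (hH : 0 < H) (a : Fin I) (b : Fin J) : dL I J H A (.inr (a, b)) = H := by
  unfold dL
  rw [Fintype.sum_sum_type]
  have h1 : ∑ x : Fin I × Fin J, Bm I J H A (.inr (a, b)) (.inl x) = H - rr I J H A a ↑b := by
    have : ∀ x : Fin I × Fin J, Bm I J H A (.inr (a, b)) (.inl x)
        = if x = (a, b) then H - rr I J H A a ↑b else 0 := by
      rintro ⟨a', b'⟩; rfl
    rw [Finset.sum_congr rfl (fun x _ => this x), Finset.sum_ite_eq']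
    simp
  have h2 : ∑ x : Fin J × Fin I, Bm I J H A (.inr (a, b)) (.inr x) = cc I J H A b ↑a := by
    rw [Fintype.sum_prod_type_right]
    have h3 : ∀ k : Fin I,
        (∑ b' : Fin J, Bm I J H A (.inr (a, b)) (.inr (b', k)))
          = ov ((k : ℕ) * H) H (Qf I J H A b ↑a) (cc I J H A b ↑a) := by
      intro k
      simp only [Bm]
      rw [Finset.sum_ite_eq']
      simp
    rw [Finset.sum_congr rfl (fun k _ => h3 k)]
    rw [Fin.sum_univ_eq_sum_range
      (fun n => ov (n * H) H (Qf I J H A b ↑a) (cc I J H A b ↑a)) I]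
    rw [sum_ov_blocks]
    exact ov_full _ _ _ (le_trans (Qf_bound I J H A a b) (Qf_le I J H A hH b I))
  rw [h1, h2]
  have h4 : cc I J H A b ↑a = rr I J H A a ↑b := by rw [cc_fin, rr_fin]
  have h5 := rr_lt I J H A hH a ↑b
  omega

lemma dR_u (hH : 0 < H) (a : Fin I) (b : Fin J) : dR I J H A (.inl (a, b)) = H := by
  unfold dR
  rw [Fintype.sum_sum_type]
  have h1 : ∑ x : Fin I × Fin J, Bm I J H A (.inl x) (.inl (a, b)) = rr I J H A a ↑b := by
    rw [Fintype.sum_prod_type_right]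
    have h3 : ∀ k : Fin J,
        (∑ a' : Fin I, Bm I J H A (.inl (a', k)) (.inl (a, b)))
          = ov ((k : ℕ) * H) H (Pf I J H A a ↑b) (rr I J H A a ↑b) := by
      intro k
      have : ∀ a' : Fin I, Bm I J H A (.inl (a', k)) (.inl (a, b))
          = if a = a' then ov ((k : ℕ) * H) H (Pf I J H A a' ↑b) (rr I J H A a' ↑b) else 0 := by
        intro a'; rfl
      rw [Finset.sum_congr rfl (fun a' _ => this a'), Finset.sum_ite_eq]
      simp
    rw [Finset.sum_congr rfl (fun k _ => h3 k)]
    rw [Fin.sum_univ_eq_sum_range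
      (fun n => ov (n * H) H (Pf I J H A a ↑b) (rr I J H A a ↑b)) J]
    rw [sum_ov_blocks]
    exact ov_full _ _ _ (le_trans (Pf_bound I J H A a b) (Pf_le I J H A hH a J))
  have h2 : ∑ x : Fin I × Fin J, Bm I J H A (.inr x) (.inl (a, b)) = H - rr I J H A a ↑b := by
    have : ∀ x : Fin I × Fin J, Bm I J H A (.inr x) (.inl (a, b))
        = if (a, b) = x then H - rr I J H A x.1 ↑x.2 else 0 := by
      rintro ⟨a', b'⟩; rfl
    rw [Finset.sum_congr rfl (fun x _ => this x), Finset.sum_ite_eq]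
    simp
  rw [h1, h2]
  have h5 := rr_lt I J H A hH a ↑b
  omega

lemma dR_bcopy (b : Fin J) (k : Fin I) :
    dR I J H A (.inr (b, k)) = ov ((k : ℕ) * H) H 0 (Qf I J H A b I) := by
  unfold dR
  rw [Fintype.sum_sum_type]
  have h1 : ∑ x : Fin I × Fin J, Bm I J H A (.inl x) (.inr (b, k)) = 0 := by
    apply Finset.sum_eq_zero; rintro ⟨a', k'⟩ _; rfl
  have h2 : ∑ x : Fin I × Fin J, Bm I J H A (.inr x) (.inr (b, k))
      = ov ((k : ℕ) * H) H 0 (Qf I J H A b I) := by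
    rw [Fintype.sum_prod_type]
    have h3 : ∀ a : Fin I,
        (∑ b' : Fin J, Bm I J H A (.inr (a, b')) (.inr (b, k)))
          = ov ((k : ℕ) * H) H (Qf I J H A b ↑a) (cc I J H A b ↑a) := by
      intro a
      have : ∀ b' : Fin J, Bm I J H A (.inr (a, b')) (.inr (b, k))
          = if b = b' then ov ((k : ℕ) * H) H (Qf I J H A b' ↑a) (cc I J H A b' ↑a) else 0 := by
        intro b'; rfl
      rw [Finset.sum_congr rfl (fun b' _ => this b'), Finset.sum_ite_eq]
      simp
    rw [Finset.sum_congr rfl (fun a _ => h3 a)]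
    rw [Fin.sum_univ_eq_sum_range
      (fun n => ov ((k : ℕ) * H) H (Qf I J H A b n) (cc I J H A b n)) I]
    unfold Qf
    exact sum_ov_prefix (cc I J H A b) ((k : ℕ) * H) H I
  rw [h1, h2, Nat.zero_add]

lemma dL_le (hH : 0 < H) (l : LL I J) : dL I J H A l ≤ H := by
  rcases l with ⟨a, k⟩ | ⟨a, b⟩
  · rw [dL_copy]; exact ov_le_t _ _ _ _
  · rw [dL_w I J H A hH]

lemma dR_le (hH : 0 < H) (r : RR I J) : dR I J H A r ≤ H := by
  rcases r with ⟨a, b⟩ | ⟨b, k⟩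
  · rw [dR_u I J H A hH]
  · rw [dR_bcopy]; exact ov_le_t _ _ _ _

/-- the H-regular square matrix -/
def Nm : VV I J → VV I J → ℕ := fun x y => match x, y with
  | .inl l, .inl l' => if l' = l then H - dL I J H A l else 0
  | .inl l, .inr r => Bm I J H A l r
  | .inr r, .inl l => Bm I J H A l r
  | .inr r, .inr r' => if r' = r then H - dR I J H A r else 0

lemma Nm_row (hH : 0 < H) (x : VV I J) : ∑ y, Nm I J H A x y = H := by
  rcases x with l | r
  · rw [Fintype.sum_sum_type]
    have h1 : ∑ l' : LL I J, Nm I J H A (.inl l) (.inl l') = H - dL I J H A l := by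
      have : ∀ l' : LL I J, Nm I J H A (.inl l) (.inl l')
          = if l' = l then H - dL I J H A l else 0 := fun l' => rfl
      rw [Finset.sum_congr rfl (fun l' _ => this l'), Finset.sum_ite_eq']
      simp
    have h2 : ∑ r : RR I J, Nm I J H A (.inl l) (.inr r) = dL I J H A l := rfl
    rw [h1, h2]
    have := dL_le I J H A hH l
    omega
  · rw [Fintype.sum_sum_type]
    have h1 : ∑ l : LL I J, Nm I J H A (.inr r) (.inl l) = dR I J H A r := rfl
    have h2 : ∑ r' : RR I J, Nm I J H A (.inr r) (.inr r') = H - dR I J H A r := by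
      have : ∀ r' : RR I J, Nm I J H A (.inr r) (.inr r')
          = if r' = r then H - dR I J H A r else 0 := fun r' => rfl
      rw [Finset.sum_congr rfl (fun r' _ => this r'), Finset.sum_ite_eq']
      simp
    rw [h1, h2]
    have := dR_le I J H A hH r
    omega

lemma Nm_col (hH : 0 < H) (y : VV I J) : ∑ x, Nm I J H A x y = H := by
  rcases y with l | r
  · rw [Fintype.sum_sum_type]
    have h1 : ∑ l' : LL I J, Nm I J H A (.inl l') (.inl l) = H - dL I J H A l := by
      have : ∀ l' : LL I J, Nm I J H A (.inl l') (.inl l)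
          = if l = l' then H - dL I J H A l' else 0 := fun l' => rfl
      rw [Finset.sum_congr rfl (fun l' _ => this l'), Finset.sum_ite_eq]
      simp
    have h2 : ∑ r : RR I J, Nm I J H A (.inr r) (.inl l) = dL I J H A l := rfl
    rw [h1, h2]
    have := dL_le I J H A hH l
    omega
  · rw [Fintype.sum_sum_type]
    have h1 : ∑ l : LL I J, Nm I J H A (.inl l) (.inr r) = dR I J H A r := rfl
    have h2 : ∑ r' : RR I J, Nm I J H A (.inr r') (.inr r) = H - dR I J H A r := by
      have : ∀ r' : RR I J, Nm I J H A (.inr r') (.inr r)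
          = if r = r' then H - dR I J H A r' else 0 := fun r' => rfl
      rw [Finset.sum_congr rfl (fun r' _ => this r'), Finset.sum_ite_eq]
      simp
    rw [h1, h2]
    have := dR_le I J H A hH r
    omega

end Gadget

section Perm

lemma perm_sum_row {V : Type*} [Fintype V] [DecidableEq V] (e : Equiv.Perm V) (x : V) :
    (∑ y : V, if e x = y then 1 else 0 : ℕ) = 1 := by
  rw [Finset.sum_ite_eq]; simp

lemma perm_sum_col {V : Type*} [Fintype V] [DecidableEq V] (e : Equiv.Perm V) (y : V) :
    (∑ x : V, if e x = y then 1 else 0 : ℕ) = 1 := by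
  have hx : ∀ x, (e x = y) ↔ (x = e.symm y) := by
    intro x
    constructor
    · intro hh; rw [← hh]; simp
    · intro hh; rw [hh]; simp
  simp only [hx]
  rw [Finset.sum_ite_eq']; simp

end Perm

section Reading

variable (I J H : ℕ) (A : Matrix (Fin I) (Fin J) ℕ) (σ : Fin H → Equiv.Perm (VV I J))

/-- units of entry (a,b) placed in class h, read off on the row side -/
def Ef (h : Fin H) (a : Fin I) (b : Fin J) : ℕ :=
  ∑ k : Fin J, if σ h (.inl (.inl (a, k))) = (.inr (.inl (a, b)) : VV I J) then 1 else 0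

/-- units of entry (a,b) placed in class h, read off on the column side -/
def Wf (h : Fin H) (a : Fin I) (b : Fin J) : ℕ :=
  ∑ k : Fin I, if σ h (.inl (.inr (a, b))) = (.inr (.inr (b, k)) : VV I J) then 1 else 0

variable (hdec : ∀ x y, Nm I J H A x y = ∑ k, if σ k x = y then 1 else 0)

include hdec in
lemma ind_le (h : Fin H) (x y : VV I J) :
    (if σ h x = y then 1 else 0 : ℕ) ≤ Nm I J H A x y := by
  rw [hdec x y]
  exact Finset.single_le_sum (f := fun k => if σ k x = y then (1 : ℕ) else 0)
    (fun _ _ => Nat.zero_le _) (Finset.mem_univ h)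

include hdec in
/-- total over classes -/
lemma Ef_total (hH : 0 < H) (a : Fin I) (b : Fin J) : ∑ h, Ef I J H σ h a b = A a b % H := by
  unfold Ef
  rw [Finset.sum_comm]
  have h1 : ∀ k : Fin J,
      (∑ h : Fin H, if σ h (.inl (.inl (a, k))) = (.inr (.inl (a, b)) : VV I J) then 1 else 0)
        = ov ((k : ℕ) * H) H (Pf I J H A a ↑b) (rr I J H A a ↑b) := by
    intro k
    rw [← hdec]
    show Bm I J H A (.inl (a, k)) (.inl (a, b)) = _
    simp [Bm]
  rw [Finset.sum_congr rfl (fun k _ => h1 k)]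
  rw [Fin.sum_univ_eq_sum_range
    (fun n => ov (n * H) H (Pf I J H A a ↑b) (rr I J H A a ↑b)) J]
  rw [sum_ov_blocks,
    ov_full _ _ _ (le_trans (Pf_bound I J H A a b) (Pf_le I J H A hH a J)), rr_fin]

lemma Ef_le_one (h : Fin H) (a : Fin I) (b : Fin J) : Ef I J H σ h a b ≤ 1 := by
  unfold Ef
  apply sum_ite_le_one
  intro x y hx hy
  have := (σ h).injective (hx.trans hy.symm)
  simpa using this

lemma Wf_le_one (h : Fin H) (a : Fin I) (b : Fin J) : Wf I J H σ h a b ≤ 1 := by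
  unfold Wf
  apply sum_ite_le_one
  intro x y hx hy
  have := hx.symm.trans hy
  simpa using this

include hdec in
lemma Ef_zero (h : Fin H) (a : Fin I) (b : Fin J) (hz : A a b % H = 0) :
    Ef I J H σ h a b = 0 := by
  unfold Ef
  apply Finset.sum_eq_zero
  intro k _
  have h1 := ind_le I J H A σ hdec h (.inl (.inl (a, k))) (.inr (.inl (a, b)))
  have h2 : Nm I J H A (.inl (.inl (a, k))) (.inr (.inl (a, b)))
      = ov ((k : ℕ) * H) H (Pf I J H A a ↑b) (rr I J H A a ↑b) := by
    show Bm I J H A (.inl (a, k)) (.inl (a, b)) = _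
    simp [Bm]
  have h3 : rr I J H A a ↑b = 0 := by rw [rr_fin]; exact hz
  have h4 := ov_le_l ((k : ℕ) * H) H (Pf I J H A a ↑b) (rr I J H A a ↑b)
  omega

include hdec in
lemma ind_zero (h : Fin H) (x y : VV I J) (hxy : Nm I J H A x y = 0) :
    (if σ h x = y then 1 else 0 : ℕ) = 0 := by
  have := ind_le I J H A σ hdec h x y
  omega

include hdec in
lemma cover_u (hH : 0 < H) (h : Fin H) (a : Fin I) (b : Fin J) :
    Ef I J H σ h a b
      + (if σ h (.inl (.inr (a, b))) = (.inr (.inl (a, b)) : VV I J) then 1 else 0) = 1 := by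
  have h1 := perm_sum_col (σ h) ((.inr (.inl (a, b))) : VV I J)
  rw [Fintype.sum_sum_type, Fintype.sum_sum_type, Fintype.sum_sum_type] at h1
  have hSC : ∑ p : Fin I × Fin J,
      (if σ h (.inl (.inl p)) = (.inr (.inl (a, b)) : VV I J) then 1 else 0 : ℕ)
        = Ef I J H σ h a b := by
    rw [Fintype.sum_prod_type]
    rw [Finset.sum_eq_single_of_mem a (Finset.mem_univ a)]
    · rfl
    · intro a' _ hne
      apply Finset.sum_eq_zero
      intro k _
      apply ind_zero I J H A σ hdec
      show Bm I J H A (.inl (a', k)) (.inl (a, b)) = 0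
      simp only [Bm]
      rw [if_neg (Ne.symm hne)]
  have hSW : ∑ p : Fin I × Fin J,
      (if σ h (.inl (.inr p)) = (.inr (.inl (a, b)) : VV I J) then 1 else 0 : ℕ)
        = (if σ h (.inl (.inr (a, b))) = (.inr (.inl (a, b)) : VV I J) then 1 else 0) := by
    apply Finset.sum_eq_single_of_mem (a, b) (Finset.mem_univ _)
    rintro ⟨a', b'⟩ _ hne
    apply ind_zero I J H A σ hdec
    show Bm I J H A (.inr (a', b')) (.inl (a, b)) = 0
    simp only [Bm]
    rw [if_neg (Ne.symm hne)]
  have hSU : ∑ p : Fin I × Fin J,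
      (if σ h (.inr (.inl p)) = (.inr (.inl (a, b)) : VV I J) then 1 else 0 : ℕ) = 0 := by
    apply Finset.sum_eq_zero
    intro p _
    apply ind_zero I J H A σ hdec
    show (if ((.inl (a, b)) : RR I J) = .inl p then H - dR I J H A (.inl p) else 0) = 0
    by_cases hp : ((.inl (a, b)) : RR I J) = .inl p
    · rw [if_pos hp]
      have hpe : p = (a, b) := by simpa using hp.symm
      subst hpe
      rw [dR_u I J H A hH]
      omega
    · rw [if_neg hp]
  have hSB : ∑ q : Fin J × Fin I,
      (if σ h (.inr (.inr q)) = (.inr (.inl (a, b)) : VV I J) then 1 else 0 : ℕ) = 0 := by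
    apply Finset.sum_eq_zero
    intro q _
    apply ind_zero I J H A σ hdec
    show (if ((.inl (a, b)) : RR I J) = .inr q then H - dR I J H A (.inr q) else 0) = 0
    rw [if_neg (by simp)]
  rw [hSC, hSW, hSU, hSB] at h1
  omega

include hdec in
lemma cover_w (hH : 0 < H) (h : Fin H) (a : Fin I) (b : Fin J) :
    (if σ h (.inl (.inr (a, b))) = (.inr (.inl (a, b)) : VV I J) then 1 else 0)
      + Wf I J H σ h a b = 1 := by
  have h1 := perm_sum_row (σ h) ((.inl (.inr (a, b))) : VV I J)
  rw [Fintype.sum_sum_type, Fintype.sum_sum_type, Fintype.sum_sum_type] at h1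
  have hdLw := dL_w I J H A hH a b
  have hTL1 : ∑ p : Fin I × Fin J,
      (if σ h (.inl (.inr (a, b))) = (.inl (.inl p) : VV I J) then 1 else 0 : ℕ) = 0 := by
    apply Finset.sum_eq_zero
    intro p _
    apply ind_zero I J H A σ hdec
    show (if ((.inl p) : LL I J) = .inr (a, b) then H - dL I J H A (.inr (a, b)) else 0) = 0
    rw [if_neg (by simp)]
  have hTL2 : ∑ p : Fin I × Fin J,
      (if σ h (.inl (.inr (a, b))) = (.inl (.inr p) : VV I J) then 1 else 0 : ℕ) = 0 := by
    apply Finset.sum_eq_zero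
    intro p _
    apply ind_zero I J H A σ hdec
    show (if ((.inr p) : LL I J) = .inr (a, b) then H - dL I J H A (.inr (a, b)) else 0) = 0
    rw [hdLw]
    simp
  have hTU : ∑ p : Fin I × Fin J,
      (if σ h (.inl (.inr (a, b))) = (.inr (.inl p) : VV I J) then 1 else 0 : ℕ)
        = (if σ h (.inl (.inr (a, b))) = (.inr (.inl (a, b)) : VV I J) then 1 else 0) := by
    apply Finset.sum_eq_single_of_mem (a, b) (Finset.mem_univ _)
    rintro ⟨a', b'⟩ _ hne
    apply ind_zero I J H A σ hdec
    show Bm I J H A (.inr (a, b)) (.inl (a', b')) = 0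
    simp only [Bm]
    rw [if_neg hne]
  have hTB : ∑ q : Fin J × Fin I,
      (if σ h (.inl (.inr (a, b))) = (.inr (.inr q) : VV I J) then 1 else 0 : ℕ)
        = Wf I J H σ h a b := by
    rw [Fintype.sum_prod_type]
    rw [Finset.sum_eq_single_of_mem b (Finset.mem_univ b)]
    · rfl
    · intro b' _ hne
      apply Finset.sum_eq_zero
      intro k _
      apply ind_zero I J H A σ hdec
      show Bm I J H A (.inr (a, b)) (.inr (b', k)) = 0
      simp only [Bm]
      rw [if_neg hne]
  rw [hTL1, hTL2, hTU, hTB] at h1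
  omega

include hdec in
lemma act_one (h : Fin H) (a : Fin I) (k : Fin J)
    (hfull : ((k : ℕ) + 1) * H ≤ Pf I J H A a J) :
    (∑ b' : Fin J,
      if σ h (.inl (.inl (a, k))) = (.inr (.inl (a, b')) : VV I J) then 1 else 0 : ℕ) = 1 := by
  have hdLc : dL I J H A (.inl (a, k)) = H := by
    rw [dL_copy]
    have hr : ((k : ℕ) + 1) * H = (k : ℕ) * H + H := by ring
    unfold ov
    omega
  have h1 := perm_sum_row (σ h) ((.inl (.inl (a, k))) : VV I J)
  rw [Fintype.sum_sum_type, Fintype.sum_sum_type, Fintype.sum_sum_type] at h1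
  have hTL1 : ∑ p : Fin I × Fin J,
      (if σ h (.inl (.inl (a, k))) = (.inl (.inl p) : VV I J) then 1 else 0 : ℕ) = 0 := by
    apply Finset.sum_eq_zero
    intro p _
    apply ind_zero I J H A σ hdec
    show (if ((.inl p) : LL I J) = .inl (a, k) then H - dL I J H A (.inl (a, k)) else 0) = 0
    rw [hdLc]
    simp
  have hTL2 : ∑ p : Fin I × Fin J,
      (if σ h (.inl (.inl (a, k))) = (.inl (.inr p) : VV I J) then 1 else 0 : ℕ) = 0 := by
    apply Finset.sum_eq_zero
    intro p _
    apply ind_zero I J H A σ hdec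
    show (if ((.inr p) : LL I J) = .inl (a, k) then H - dL I J H A (.inl (a, k)) else 0) = 0
    rw [if_neg (by simp)]
  have hTU : ∑ p : Fin I × Fin J,
      (if σ h (.inl (.inl (a, k))) = (.inr (.inl p) : VV I J) then 1 else 0 : ℕ)
        = ∑ b' : Fin J,
            (if σ h (.inl (.inl (a, k))) = (.inr (.inl (a, b')) : VV I J) then 1 else 0) := by
    rw [Fintype.sum_prod_type]
    rw [Finset.sum_eq_single_of_mem a (Finset.mem_univ a)]
    intro a' _ hne
    apply Finset.sum_eq_zero
    intro b' _
    apply ind_zero I J H A σ hdec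
    show Bm I J H A (.inl (a, k)) (.inl (a', b')) = 0
    simp only [Bm]
    rw [if_neg hne]
  have hTB : ∑ q : Fin J × Fin I,
      (if σ h (.inl (.inl (a, k))) = (.inr (.inr q) : VV I J) then 1 else 0 : ℕ) = 0 := by
    apply Finset.sum_eq_zero
    intro q _
    apply ind_zero I J H A σ hdec
    show Bm I J H A (.inl (a, k)) (.inr q) = 0
    rfl
  rw [hTL1, hTL2, hTU, hTB] at h1
  omega

include hdec in
lemma act_zero (h : Fin H) (a : Fin I) (k : Fin J)
    (hnone : Pf I J H A a J ≤ (k : ℕ) * H) :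
    (∑ b' : Fin J,
      if σ h (.inl (.inl (a, k))) = (.inr (.inl (a, b')) : VV I J) then 1 else 0 : ℕ) = 0 := by
  apply Finset.sum_eq_zero
  intro b' _
  apply ind_zero I J H A σ hdec
  show Bm I J H A (.inl (a, k)) (.inl (a, b')) = 0
  simp only [Bm, if_true]
  have hb := Pf_bound I J H A a b'
  unfold ov
  omega

include hdec in
lemma cov_one (hH : 0 < H) (h : Fin H) (b : Fin J) (k : Fin I)
    (hfull : ((k : ℕ) + 1) * H ≤ Qf I J H A b I) :
    (∑ a' : Fin I,
      if σ h (.inl (.inr (a', b))) = (.inr (.inr (b, k)) : VV I J) then 1 else 0 : ℕ) = 1 := by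
  have hdRb : dR I J H A (.inr (b, k)) = H := by
    rw [dR_bcopy]
    have hr : ((k : ℕ) + 1) * H = (k : ℕ) * H + H := by ring
    unfold ov
    omega
  have h1 := perm_sum_col (σ h) ((.inr (.inr (b, k))) : VV I J)
  rw [Fintype.sum_sum_type, Fintype.sum_sum_type, Fintype.sum_sum_type] at h1
  have hSC : ∑ p : Fin I × Fin J,
      (if σ h (.inl (.inl p)) = (.inr (.inr (b, k)) : VV I J) then 1 else 0 : ℕ) = 0 := by
    apply Finset.sum_eq_zero
    intro p _
    apply ind_zero I J H A σ hdec
    show Bm I J H A (.inl p) (.inr (b, k)) = 0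
    rcases p with ⟨a', k'⟩
    rfl
  have hSW : ∑ p : Fin I × Fin J,
      (if σ h (.inl (.inr p)) = (.inr (.inr (b, k)) : VV I J) then 1 else 0 : ℕ)
        = ∑ a' : Fin I,
            (if σ h (.inl (.inr (a', b))) = (.inr (.inr (b, k)) : VV I J) then 1 else 0) := by
    rw [Fintype.sum_prod_type_right]
    rw [Finset.sum_eq_single_of_mem b (Finset.mem_univ b)]
    intro b' _ hne
    apply Finset.sum_eq_zero
    intro a' _
    apply ind_zero I J H A σ hdec
    show Bm I J H A (.inr (a', b')) (.inr (b, k)) = 0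
    simp only [Bm]
    rw [if_neg (Ne.symm hne)]
  have hSU : ∑ p : Fin I × Fin J,
      (if σ h (.inr (.inl p)) = (.inr (.inr (b, k)) : VV I J) then 1 else 0 : ℕ) = 0 := by
    apply Finset.sum_eq_zero
    intro p _
    apply ind_zero I J H A σ hdec
    show (if ((.inr (b, k)) : RR I J) = .inl p then H - dR I J H A (.inl p) else 0) = 0
    rw [if_neg (by simp)]
  have hSB : ∑ q : Fin J × Fin I,
      (if σ h (.inr (.inr q)) = (.inr (.inr (b, k)) : VV I J) then 1 else 0 : ℕ) = 0 := by
    apply Finset.sum_eq_zero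
    intro q _
    apply ind_zero I J H A σ hdec
    show (if ((.inr (b, k)) : RR I J) = .inr q then H - dR I J H A (.inr q) else 0) = 0
    by_cases hp : ((.inr (b, k)) : RR I J) = .inr q
    · rw [if_pos hp]
      have hpe : q = (b, k) := by simpa using hp.symm
      subst hpe
      rw [hdRb]
      omega
    · rw [if_neg hp]
  rw [hSC, hSW, hSU, hSB] at h1
  omega

include hdec in
lemma cov_zero (h : Fin H) (b : Fin J) (k : Fin I)
    (hnone : Qf I J H A b I ≤ (k : ℕ) * H) :
    (∑ a' : Fin I,
      if σ h (.inl (.inr (a', b))) = (.inr (.inr (b, k)) : VV I J) then 1 else 0 : ℕ) = 0 := by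
  apply Finset.sum_eq_zero
  intro a' _
  apply ind_zero I J H A σ hdec
  show Bm I J H A (.inr (a', b)) (.inr (b, k)) = 0
  simp only [Bm, if_true]
  have hb := Qf_bound I J H A a' b
  unfold ov
  omega

include hdec in
lemma Ef_row (hH : 0 < H) (h : Fin H) (a : Fin I) :
    Pf I J H A a J / H ≤ ∑ b, Ef I J H σ h a b ∧
      ∑ b, Ef I J H σ h a b ≤ (Pf I J H A a J + H - 1) / H := by
  set m := Pf I J H A a J with hm
  have hswap : ∑ b, Ef I J H σ h a b
      = ∑ k : Fin J, ∑ b : Fin J,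
          (if σ h (.inl (.inl (a, k))) = (.inr (.inl (a, b)) : VV I J) then 1 else 0 : ℕ) := by
    unfold Ef
    exact Finset.sum_comm
  have hmle : m ≤ J * H := Pf_le I J H A hH a J
  constructor
  · have c1 : m / H = ∑ k ∈ Finset.range J, (if (k+1)*H ≤ m then 1 else 0 : ℕ) := by
      rw [tele_floor H m hH J, min_eq_right hmle]
    have c2 : (∑ k ∈ Finset.range J, if (k+1)*H ≤ m then 1 else 0 : ℕ)
        = ∑ k : Fin J, (if ((k : ℕ)+1)*H ≤ m then 1 else 0 : ℕ) :=
      (Fin.sum_univ_eq_sum_range (fun n => if (n+1)*H ≤ m then 1 else 0) J).symm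
    rw [hswap, c1, c2]
    apply Finset.sum_le_sum
    intro k _
    by_cases hk : ((k : ℕ)+1)*H ≤ m
    · rw [if_pos hk, act_one I J H A σ hdec h a k hk]
    · rw [if_neg hk]
      exact Nat.zero_le _
  · have c1 : (∑ k ∈ Finset.range J, if k*H < m then 1 else 0 : ℕ) = (m + H - 1) / H := by
      rw [tele_ceil H m hH J, min_eq_right hmle]
    have c2 : (∑ k ∈ Finset.range J, if k*H < m then 1 else 0 : ℕ)
        = ∑ k : Fin J, (if (k : ℕ)*H < m then 1 else 0 : ℕ) :=
      (Fin.sum_univ_eq_sum_range (fun n => if n*H < m then 1 else 0) J).symm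
    rw [hswap, ← c1, c2]
    apply Finset.sum_le_sum
    intro k _
    by_cases hk : (k : ℕ)*H < m
    · rw [if_pos hk]
      apply sum_ite_le_one
      intro x y hx hy
      have := hx.symm.trans hy
      simpa using this
    · rw [if_neg hk]
      rw [act_zero I J H A σ hdec h a k (by omega)]

include hdec in
lemma Ef_col (hH : 0 < H) (h : Fin H) (b : Fin J) :
    Qf I J H A b I / H ≤ ∑ a, Ef I J H σ h a b ∧
      ∑ a, Ef I J H σ h a b ≤ (Qf I J H A b I + H - 1) / H := by
  have hEW : ∀ a, Ef I J H σ h a b = Wf I J H σ h a b := by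
    intro a
    have c1 := cover_u I J H A σ hdec hH h a b
    have c2 := cover_w I J H A σ hdec hH h a b
    omega
  have hswap : ∑ a, Ef I J H σ h a b
      = ∑ k : Fin I, ∑ a : Fin I,
          (if σ h (.inl (.inr (a, b))) = (.inr (.inr (b, k)) : VV I J) then 1 else 0 : ℕ) := by
    rw [Finset.sum_congr rfl (fun a _ => hEW a)]
    unfold Wf
    exact Finset.sum_comm
  set m := Qf I J H A b I with hm
  have hmle : m ≤ I * H := Qf_le I J H A hH b I
  constructor
  · have c1 : m / H = ∑ k ∈ Finset.range I, (if (k+1)*H ≤ m then 1 else 0 : ℕ) := by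
      rw [tele_floor H m hH I, min_eq_right hmle]
    have c2 : (∑ k ∈ Finset.range I, if (k+1)*H ≤ m then 1 else 0 : ℕ)
        = ∑ k : Fin I, (if ((k : ℕ)+1)*H ≤ m then 1 else 0 : ℕ) :=
      (Fin.sum_univ_eq_sum_range (fun n => if (n+1)*H ≤ m then 1 else 0) I).symm
    rw [hswap, c1, c2]
    apply Finset.sum_le_sum
    intro k _
    by_cases hk : ((k : ℕ)+1)*H ≤ m
    · rw [if_pos hk, cov_one I J H A σ hdec hH h b k hk]
    · rw [if_neg hk]
      exact Nat.zero_le _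
  · have c1 : (∑ k ∈ Finset.range I, if k*H < m then 1 else 0 : ℕ) = (m + H - 1) / H := by
      rw [tele_ceil H m hH I, min_eq_right hmle]
    have c2 : (∑ k ∈ Finset.range I, if k*H < m then 1 else 0 : ℕ)
        = ∑ k : Fin I, (if (k : ℕ)*H < m then 1 else 0 : ℕ) :=
      (Fin.sum_univ_eq_sum_range (fun n => if n*H < m then 1 else 0) I).symm
    rw [hswap, ← c1, c2]
    apply Finset.sum_le_sum
    intro k _
    by_cases hk : (k : ℕ)*H < m
    · rw [if_pos hk]
      apply sum_ite_le_one
      intro x y hx hy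
      have := hx.trans hy.symm
      have := (σ h).injective this
      simpa using this
    · rw [if_neg hk]
      rw [cov_zero I J H A σ hdec h b k (by omega)]

end Reading


end IMD

open IMD in
/-- Integer Matrix Decomposition Theorem (Theorem 3). -/
theorem integer_matrix_decomposition (I J H : ℕ) (hH : 0 < H)
    (A : Matrix (Fin I) (Fin J) ℕ) :
    ∃ M : Fin H → Matrix (Fin I) (Fin J) ℕ,
      A = ∑ h, M h ∧
      (∀ (a : Fin I) (b : Fin J) (h : Fin H),
        A a b / H ≤ M h a b ∧ M h a b ≤ (A a b + H - 1) / H) ∧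
      (∀ (b : Fin J) (h : Fin H),
        (∑ a, A a b) / H ≤ ∑ a, M h a b ∧ ∑ a, M h a b ≤ ((∑ a, A a b) + H - 1) / H) ∧
      (∀ (a : Fin I) (h : Fin H),
        (∑ b, A a b) / H ≤ ∑ b, M h a b ∧ ∑ b, M h a b ≤ ((∑ b, A a b) + H - 1) / H) := by
  classical
  obtain ⟨σ, hdec⟩ := perm_decomp H (Nm I J H A) (Nm_row I J H A hH) (Nm_col I J H A hH)
  refine ⟨fun h => Matrix.of (fun a b => A a b / H + Ef I J H σ h a b), ?_, ?_, ?_, ?_⟩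
  · ext a b
    rw [Matrix.sum_apply]
    simp only [Matrix.of_apply]
    rw [Finset.sum_add_distrib, Finset.sum_const, Finset.card_univ, Fintype.card_fin,
      smul_eq_mul, Ef_total I J H A σ hdec hH a b]
    have := Nat.div_add_mod (A a b) H
    omega
  · intro a b h
    simp only [Matrix.of_apply]
    have key : (A a b + H - 1) / H = A a b / H + (A a b % H + H - 1) / H := by
      have dm := Nat.div_add_mod (A a b) H
      have e : A a b + H - 1 = H * (A a b / H) + (A a b % H + H - 1) := by omega
      rw [e, Nat.mul_add_div hH]
    constructor
    · exact Nat.le_add_right _ _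
    · by_cases hr0 : A a b % H = 0
      · rw [Ef_zero I J H A σ hdec h a b hr0]
        have : A a b / H ≤ (A a b + H - 1) / H := Nat.div_le_div_right (by omega)
        omega
      · have h1 : 1 ≤ (A a b % H + H - 1) / H := (Nat.one_le_div_iff hH).2 (by omega)
        have h2 := Ef_le_one I J H σ h a b
        omega
  · intro b h
    have hq : ∑ a, A a b = H * (∑ a, A a b / H) + Qf I J H A b I := by
      have e1 : ∀ a : Fin I, A a b = H * (A a b / H) + A a b % H :=
        fun a => (Nat.div_add_mod _ _).symm
      rw [Finset.sum_congr rfl (fun a _ => e1 a), Finset.sum_add_distrib, ← Finset.mul_sum]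
      congr 1
      have e2 : ∀ a : Fin I, A a b % H = cc I J H A b ↑a := fun a => (cc_fin I J H A a b).symm
      rw [Finset.sum_congr rfl (fun a _ => e2 a)]
      exact Fin.sum_univ_eq_sum_range (cc I J H A b) I
    have hsumM : ∑ a, (Matrix.of (fun a b => A a b / H + Ef I J H σ h a b)) a b
        = (∑ a, A a b / H) + ∑ a, Ef I J H σ h a b := by
      simp only [Matrix.of_apply]
      rw [Finset.sum_add_distrib]
    have hfloor : (∑ a, A a b) / H = (∑ a, A a b / H) + Qf I J H A b I / H := by
      rw [hq, Nat.mul_add_div hH]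
    have hceil : ((∑ a, A a b) + H - 1) / H
        = (∑ a, A a b / H) + (Qf I J H A b I + H - 1) / H := by
      have e3 : (∑ a, A a b) + H - 1 = H * (∑ a, A a b / H) + (Qf I J H A b I + H - 1) := by
        omega
      rw [e3, Nat.mul_add_div hH]
    have hcol := Ef_col I J H A σ hdec hH h b
    rw [hsumM, hfloor, hceil]
    omega
  · intro a h
    have hq : ∑ b, A a b = H * (∑ b, A a b / H) + Pf I J H A a J := by
      have e1 : ∀ b : Fin J, A a b = H * (A a b / H) + A a b % H :=
        fun b => (Nat.div_add_mod _ _).symm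
      rw [Finset.sum_congr rfl (fun b _ => e1 b), Finset.sum_add_distrib, ← Finset.mul_sum]
      congr 1
      have e2 : ∀ b : Fin J, A a b % H = rr I J H A a ↑b := fun b => (rr_fin I J H A a b).symm
      rw [Finset.sum_congr rfl (fun b _ => e2 b)]
      exact Fin.sum_univ_eq_sum_range (rr I J H A a) J
    have hsumM : ∑ b, (Matrix.of (fun a b => A a b / H + Ef I J H σ h a b)) a b
        = (∑ b, A a b / H) + ∑ b, Ef I J H σ h a b := by
      simp only [Matrix.of_apply]
      rw [Finset.sum_add_distrib]
    have hfloor : (∑ b, A a b) / H = (∑ b, A a b / H) + Pf I J H A a J / H := by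
      rw [hq, Nat.mul_add_div hH]
    have hceil : ((∑ b, A a b) + H - 1) / H
        = (∑ b, A a b / H) + (Pf I J H A a J + H - 1) / H := by
      have e3 : (∑ b, A a b) + H - 1 = H * (∑ b, A a b / H) + (Pf I J H A a J + H - 1) := by
        omega
      rw [e3, Nat.mul_add_div hH]
    have hrow := Ef_row I J H A σ hdec hH h a
    rw [hsumM, hfloor, hceil]
    omega
end

section
/- Let K be a positive even natural number and set H = K/2. For every n × n symmetric matrix L with nonnegative integer entries, zero diagonal, and every row sum at most K (i.e., ∑_b L_{ab} ≤ K for all a), there exist H matrices L^(1), …, L^(H) with nonnegative integer entries such that: (i) each L^(h) is symmetric; (ii) ∑_{h=1}^{H} L^(h)_{ab} = L_{ab} for all a, b; and (iii) for every h and every index a, ∑_b L^(h)_{ab} ≤ 2 and ∑_b L^(h)_{ba} ≤ 2. -/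
open Finset

namespace CF2

variable {n : ℕ}

/-- single directed edge matrix -/
def Eij (s t : Fin n) : Matrix (Fin n) (Fin n) ℕ := fun a b => if a = s ∧ b = t then 1 else 0

lemma Eij_row (s t v : Fin n) : ∑ b, Eij s t v b = if v = s then 1 else 0 := by
  by_cases h : v = s
  · subst h; simp [Eij, Finset.sum_ite_eq']
  · simp [Eij, h]

lemma Eij_col (s t v : Fin n) : ∑ b, Eij s t b v = if v = t then 1 else 0 := by
  by_cases h : v = t
  · subst h; simp [Eij, Finset.sum_ite_eq']
  · simp [Eij, h]

lemma Eij_swap (s t a b : Fin n) : Eij s t b a = Eij t s a b := by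
  simp [Eij, and_comm]

lemma Eij_diag (s t : Fin n) (h : s ≠ t) (a : Fin n) : Eij s t a a = 0 := by
  simp only [Eij, ite_eq_right_iff]
  rintro ⟨rfl, rfl⟩
  exact absurd rfl h

lemma Eij_total (s t : Fin n) : ∑ a, ∑ b, Eij s t a b = 1 := by
  have h : ∀ a, ∑ b, Eij s t a b = if a = s then 1 else 0 := fun a => Eij_row s t a
  rw [Finset.sum_congr rfl (fun a _ => h a)]
  simp [Finset.sum_ite_eq']

lemma handshake (L : Matrix (Fin n) (Fin n) ℕ) (hsym : ∀ a b, L a b = L b a)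
    (hdiag : ∀ a, L a a = 0) : (∑ a, ∑ b, L a b) % 2 = 0 := by
  classical
  have h0 : (∑ a, ∑ b, L a b) = ∑ p ∈ (univ ×ˢ univ : Finset (Fin n × Fin n)), L p.1 p.2 := by
    rw [Finset.sum_product]
  set U : Finset (Fin n × Fin n) := univ ×ˢ univ with hU
  have h1 : ∑ p ∈ U, L p.1 p.2
      = ∑ p ∈ U.filter (fun p => p.1 < p.2), L p.1 p.2
        + ∑ p ∈ U.filter (fun p => ¬ p.1 < p.2), L p.1 p.2 :=
    (Finset.sum_filter_add_sum_filter_not U _ _).symm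
  have h2 : ∑ p ∈ U.filter (fun p => ¬ p.1 < p.2), L p.1 p.2
      = ∑ p ∈ (U.filter (fun p => ¬ p.1 < p.2)).filter (fun p => p.2 < p.1), L p.1 p.2
        + ∑ p ∈ (U.filter (fun p => ¬ p.1 < p.2)).filter (fun p => ¬ p.2 < p.1), L p.1 p.2 :=
    (Finset.sum_filter_add_sum_filter_not _ _ _).symm
  have h3 : ∑ p ∈ (U.filter (fun p => ¬ p.1 < p.2)).filter (fun p => ¬ p.2 < p.1), L p.1 p.2 = 0 := by
    apply Finset.sum_eq_zero
    intro p hp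
    simp only [Finset.mem_filter] at hp
    have hpe : p.1 = p.2 := le_antisymm (not_lt.mp hp.2) (not_lt.mp hp.1.2)
    rw [hpe]; exact hdiag _
  have h4 : (U.filter (fun p => ¬ p.1 < p.2)).filter (fun p => p.2 < p.1)
      = U.filter (fun p => p.2 < p.1) := by
    ext p
    simp only [Finset.mem_filter]
    constructor
    · rintro ⟨⟨hm, _⟩, hlt⟩; exact ⟨hm, hlt⟩
    · rintro ⟨hm, hlt⟩; exact ⟨⟨hm, asymm hlt⟩, hlt⟩
  have h5 : ∑ p ∈ U.filter (fun p => p.2 < p.1), L p.1 p.2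
      = ∑ p ∈ U.filter (fun p => p.1 < p.2), L p.1 p.2 := by
    apply Finset.sum_nbij' (i := Prod.swap) (j := Prod.swap)
    · intro p hp
      simp only [hU, Finset.mem_filter, Finset.mem_product, Finset.mem_univ, true_and,
        Prod.fst_swap, Prod.snd_swap, and_true] at hp ⊢
      exact hp
    · intro p hp
      simp only [hU, Finset.mem_filter, Finset.mem_product, Finset.mem_univ, true_and,
        Prod.fst_swap, Prod.snd_swap, and_true] at hp ⊢
      exact hp
    · intro p _; exact Prod.swap_swap p
    · intro p _; exact Prod.swap_swap p
    · intro p _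
      simp only [Prod.fst_swap, Prod.snd_swap]
      exact hsym p.1 p.2
  have h6 : ∑ p ∈ (U.filter (fun p => ¬ p.1 < p.2)).filter (fun p => p.2 < p.1), L p.1 p.2
      = ∑ p ∈ U.filter (fun p => p.2 < p.1), L p.1 p.2 := by rw [h4]
  omega

lemma removeEdge (L : Matrix (Fin n) (Fin n) ℕ) (hsym : ∀ a b, L a b = L b a)
    (hdiag : ∀ a, L a a = 0) (x y : Fin n) (hxy : x ≠ y) (hpos : 0 < L x y) :
    ∃ L' : Matrix (Fin n) (Fin n) ℕ, (∀ a b, L' a b = L' b a) ∧ (∀ a, L' a a = 0) ∧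
      (∀ a b, L a b = L' a b + Eij x y a b + Eij y x a b) := by
  have hkey : ∀ a b, Eij x y a b + Eij y x a b ≤ L a b := by
    intro a b
    unfold Eij
    split_ifs with h1 h2 h2
    · exact absurd (h1.1.symm.trans h2.1) hxy
    · rw [h1.1, h1.2]; omega
    · rw [h2.1, h2.2]
      have := hsym y x
      omega
    · omega
  set L' : Matrix (Fin n) (Fin n) ℕ := fun a b => L a b - Eij x y a b - Eij y x a b with hL'def
  have hL'ab : ∀ a b, L' a b = L a b - Eij x y a b - Eij y x a b := fun a b => rfl
  refine ⟨L', fun a b => ?_, fun a => ?_, fun a b => ?_⟩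
  · rw [hL'ab, hL'ab]
    have e1 : Eij x y b a = Eij y x a b := Eij_swap x y a b
    have e2 : Eij y x b a = Eij x y a b := Eij_swap y x a b
    have e3 := hsym a b
    omega
  · rw [hL'ab]
    have e1 : Eij x y a a = 0 := Eij_diag x y hxy a
    have e2 : Eij y x a a = 0 := Eij_diag y x hxy.symm a
    have e3 := hdiag a
    omega
  · rw [hL'ab]
    have := hkey a b
    omega

/-- Core Euler-orientation lemma: an "orientation" with prescribed imbalance at `s` and `t`. -/
lemma orient_even (N : ℕ) :
    ∀ (L : Matrix (Fin n) (Fin n) ℕ), (∑ a, ∑ b, L a b) ≤ N →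
    (∀ a b, L a b = L b a) → (∀ a, L a a = 0) →
    ∀ s t : Fin n,
    (∀ v, ((∑ b, L v b) + (if v = s then 1 else 0) + (if v = t then 1 else 0)) % 2 = 0) →
    ∃ A : Matrix (Fin n) (Fin n) ℕ,
      (∀ a b, A a b + A b a = L a b) ∧
      (∀ v, (∑ b, A v b) + (if v = t then 1 else 0) = (∑ b, A b v) + (if v = s then 1 else 0)) := by
  induction N with
  | zero =>
    intro L hN hsym hdiag s t hpar
    have hL : ∀ a b, L a b = 0 := by
      intro a b
      have h1 : ∑ c, L a c ≤ ∑ a, ∑ b, L a b :=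
        Finset.single_le_sum (f := fun a => ∑ b, L a b) (fun i _ => Nat.zero_le _) (mem_univ a)
      have h2 : L a b ≤ ∑ c, L a c :=
        Finset.single_le_sum (fun i _ => Nat.zero_le _) (mem_univ b)
      omega
    have hst : s = t := by
      by_contra hne
      have hps := hpar s
      have hs0 : ∑ b, L s b = 0 := Finset.sum_eq_zero (fun b _ => hL s b)
      rw [hs0, if_pos rfl, if_neg hne] at hps
      omega
    subst hst
    refine ⟨0, fun a b => by simp [hL], fun v => by simp⟩
  | succ N ih =>
    intro L hN hsym hdiag s t hpar
    by_cases hsmall : (∑ a, ∑ b, L a b) ≤ N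
    · exact ih L hsmall hsym hdiag s t hpar
    have hL0 : ∃ a b, L a b ≠ 0 := by
      by_contra h
      push_neg at h
      have : (∑ a, ∑ b, L a b) = 0 :=
        Finset.sum_eq_zero (fun a _ => Finset.sum_eq_zero (fun b _ => h a b))
      omega
    rcases eq_or_ne s t with hst | hst
    · subst hst
      obtain ⟨a, b, hab⟩ := hL0
      have hne : a ≠ b := by
        rintro rfl
        exact hab (hdiag a)
      obtain ⟨L', hs', hd', hid⟩ := removeEdge L hsym hdiag a b hne (Nat.pos_of_ne_zero hab)
      have hdeg : ∀ v, ∑ x, L v x = (∑ x, L' v x) + (if v = a then 1 else 0) + (if v = b then 1 else 0) := by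
        intro v
        rw [Finset.sum_congr rfl (fun x _ => hid v x), Finset.sum_add_distrib,
          Finset.sum_add_distrib, Eij_row, Eij_row]
      have htot : (∑ x, ∑ y, L x y) = (∑ x, ∑ y, L' x y) + 2 := by
        have h1 : ∀ x, ∑ y, L x y = (∑ y, L' x y) + (∑ y, Eij a b x y) + (∑ y, Eij b a x y) := by
          intro x
          rw [Finset.sum_congr rfl (fun y _ => hid x y), Finset.sum_add_distrib,
            Finset.sum_add_distrib]
        rw [Finset.sum_congr rfl (fun x _ => h1 x), Finset.sum_add_distrib,
          Finset.sum_add_distrib, Eij_total, Eij_total]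
      have hN' : (∑ x, ∑ y, L' x y) ≤ N := by omega
      have hpar' : ∀ v, ((∑ x, L' v x) + (if v = b then 1 else 0) + (if v = a then 1 else 0)) % 2 = 0 := by
        intro v
        have h1 := hpar v
        have h2 := hdeg v
        omega
      obtain ⟨A', hA1, hA2⟩ := ih L' hN' hs' hd' b a hpar'
      set A : Matrix (Fin n) (Fin n) ℕ := fun x y => A' x y + Eij a b x y with hAdef
      have hAab : ∀ x y, A x y = A' x y + Eij a b x y := fun x y => rfl
      have hArow : ∀ v, ∑ x, A v x = (∑ x, A' v x) + (if v = a then 1 else 0) := by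
        intro v
        rw [Finset.sum_congr rfl (fun x _ => hAab v x), Finset.sum_add_distrib, Eij_row]
      have hAcol : ∀ v, ∑ x, A x v = (∑ x, A' x v) + (if v = b then 1 else 0) := by
        intro v
        rw [Finset.sum_congr rfl (fun x _ => hAab x v), Finset.sum_add_distrib, Eij_col]
      refine ⟨A, fun x y => ?_, fun v => ?_⟩
      · rw [hAab, hAab]
        have h1 := hA1 x y
        have h2 : Eij a b y x = Eij b a x y := Eij_swap a b x y
        have h3 := hid x y
        omega
      · rw [hArow, hAcol]
        have h1 := hA2 v
        omega
    · have hps := hpar s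
      have hodds : (∑ x, L s x) % 2 = 1 := by
        rw [if_pos rfl, if_neg hst] at hps
        omega
      have hexu : ∃ u, L s u ≠ 0 := by
        by_contra h
        push_neg at h
        have hs0 : ∑ x, L s x = 0 := Finset.sum_eq_zero (fun x _ => h x)
        omega
      obtain ⟨u, hu⟩ := hexu
      have hsu : s ≠ u := by
        rintro rfl
        exact hu (hdiag s)
      obtain ⟨L', hs', hd', hid⟩ := removeEdge L hsym hdiag s u hsu (Nat.pos_of_ne_zero hu)
      have hdeg : ∀ v, ∑ x, L v x = (∑ x, L' v x) + (if v = s then 1 else 0) + (if v = u then 1 else 0) := by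
        intro v
        rw [Finset.sum_congr rfl (fun x _ => hid v x), Finset.sum_add_distrib,
          Finset.sum_add_distrib, Eij_row, Eij_row]
      have htot : (∑ x, ∑ y, L x y) = (∑ x, ∑ y, L' x y) + 2 := by
        have h1 : ∀ x, ∑ y, L x y = (∑ y, L' x y) + (∑ y, Eij s u x y) + (∑ y, Eij u s x y) := by
          intro x
          rw [Finset.sum_congr rfl (fun y _ => hid x y), Finset.sum_add_distrib,
            Finset.sum_add_distrib]
        rw [Finset.sum_congr rfl (fun x _ => h1 x), Finset.sum_add_distrib,
          Finset.sum_add_distrib, Eij_total, Eij_total]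
      have hN' : (∑ x, ∑ y, L' x y) ≤ N := by omega
      have hpar' : ∀ v, ((∑ x, L' v x) + (if v = u then 1 else 0) + (if v = t then 1 else 0)) % 2 = 0 := by
        intro v
        have h1 := hpar v
        have h2 := hdeg v
        omega
      obtain ⟨A', hA1, hA2⟩ := ih L' hN' hs' hd' u t hpar'
      set A : Matrix (Fin n) (Fin n) ℕ := fun x y => A' x y + Eij s u x y with hAdef
      have hAab : ∀ x y, A x y = A' x y + Eij s u x y := fun x y => rfl
      have hArow : ∀ v, ∑ x, A v x = (∑ x, A' v x) + (if v = s then 1 else 0) := by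
        intro v
        rw [Finset.sum_congr rfl (fun x _ => hAab v x), Finset.sum_add_distrib, Eij_row]
      have hAcol : ∀ v, ∑ x, A x v = (∑ x, A' x v) + (if v = u then 1 else 0) := by
        intro v
        rw [Finset.sum_congr rfl (fun x _ => hAab x v), Finset.sum_add_distrib, Eij_col]
      refine ⟨A, fun x y => ?_, fun v => ?_⟩
      · rw [hAab, hAab]
        have h1 := hA1 x y
        have h2 : Eij s u y x = Eij u s x y := Eij_swap s u x y
        have h3 := hid x y
        omega
      · rw [hArow, hAcol]
        have h1 := hA2 v
        omega

/-- Pairing lemma: a symmetric 0/1 "perfect matching" on a set of even cardinality. -/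
lemma pairing : ∀ (c : ℕ) (S : Finset (Fin n)), S.card = 2 * c →
    ∃ F : Matrix (Fin n) (Fin n) ℕ, (∀ a b, F a b = F b a) ∧ (∀ a, F a a = 0) ∧
      (∀ v, ∑ b, F v b = if v ∈ S then 1 else 0) := by
  intro c
  induction c with
  | zero =>
    intro S hS
    have hSe : S = ∅ := Finset.card_eq_zero.mp (by omega)
    subst hSe
    exact ⟨0, fun a b => rfl, fun a => rfl, fun v => by simp⟩
  | succ c ih =>
    intro S hS
    obtain ⟨a, ha⟩ := Finset.card_pos.mp (show 0 < S.card by omega)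
    obtain ⟨b, hb⟩ := Finset.card_pos.mp
      (show 0 < (S.erase a).card by rw [Finset.card_erase_of_mem ha]; omega)
    have hba : b ≠ a := Finset.ne_of_mem_erase hb
    have hbS : b ∈ S := Finset.mem_of_mem_erase hb
    obtain ⟨F', hs', hd', hr'⟩ := ih ((S.erase a).erase b)
      (by rw [Finset.card_erase_of_mem hb, Finset.card_erase_of_mem ha]; omega)
    set F : Matrix (Fin n) (Fin n) ℕ := fun x y => F' x y + Eij a b x y + Eij b a x y with hFdef
    have hFab : ∀ x y, F x y = F' x y + Eij a b x y + Eij b a x y := fun x y => rfl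
    refine ⟨F, fun x y => ?_, fun x => ?_, fun v => ?_⟩
    · rw [hFab, hFab]
      have h1 := hs' x y
      have h2 : Eij a b y x = Eij b a x y := Eij_swap a b x y
      have h3 : Eij b a y x = Eij a b x y := Eij_swap b a x y
      omega
    · rw [hFab]
      have e1 : Eij a b x x = 0 := Eij_diag a b (Ne.symm hba) x
      have e2 : Eij b a x x = 0 := Eij_diag b a hba x
      have e3 := hd' x
      omega
    · rw [Finset.sum_congr rfl (fun x _ => hFab v x), Finset.sum_add_distrib,
        Finset.sum_add_distrib, Eij_row, Eij_row, hr']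
      by_cases hva : v = a
      · have e1 : v ∉ (S.erase a).erase b := by
          rw [hva]; simp [Finset.mem_erase]
        have e2 : v ≠ b := by rw [hva]; exact Ne.symm hba
        have e3 : v ∈ S := by rw [hva]; exact ha
        rw [if_neg e1, if_pos hva, if_neg e2, if_pos e3]
      · by_cases hvb : v = b
        · have e1 : v ∉ (S.erase a).erase b := by
            rw [hvb]; simp [Finset.mem_erase]
          have e2 : v ∈ S := by rw [hvb]; exact hbS
          rw [if_neg e1, if_neg hva, if_pos hvb, if_pos e2]
        · have hmem : v ∈ (S.erase a).erase b ↔ v ∈ S := by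
            simp [Finset.mem_erase, hva, hvb]
          rw [if_neg hva, if_neg hvb]
          by_cases hvS : v ∈ S
          · rw [if_pos (hmem.mpr hvS), if_pos hvS]
          · rw [if_neg (fun h => hvS (hmem.mp h)), if_neg hvS]

/-- A balanced orientation of a symmetric zero-diagonal matrix. -/
lemma orient (L : Matrix (Fin n) (Fin n) ℕ) (hsym : ∀ a b, L a b = L b a)
    (hdiag : ∀ a, L a a = 0) :
    ∃ A : Matrix (Fin n) (Fin n) ℕ, (∀ a b, A a b + A b a = L a b) ∧
      (∀ v, 2 * (∑ b, A v b) ≤ (∑ b, L v b) + 1) ∧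
      (∀ v, 2 * (∑ b, A b v) ≤ (∑ b, L v b) + 1) := by
  classical
  cases isEmpty_or_nonempty (Fin n) with
  | inl h => exact ⟨0, fun a => isEmptyElim a, fun v => isEmptyElim v, fun v => isEmptyElim v⟩
  | inr h =>
    obtain ⟨s0⟩ := h
    set S : Finset (Fin n) := univ.filter (fun v => (∑ b, L v b) % 2 = 1) with hSdef
    have hcard : ∃ c, S.card = 2 * c := by
      have h1 := handshake L hsym hdiag
      have h2 : (∑ v, ∑ b, L v b) % 2 = (∑ v, (∑ b, L v b) % 2) % 2 := Finset.sum_nat_mod _ _ _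
      have h3 : ∑ v, (∑ b, L v b) % 2 = ∑ v, (if (∑ b, L v b) % 2 = 1 then 1 else 0) :=
        Finset.sum_congr rfl (fun v _ => by
          rcases Nat.mod_two_eq_zero_or_one (∑ b, L v b) with hm | hm <;> simp [hm])
      have h4 : S.card = ∑ v, (if (∑ b, L v b) % 2 = 1 then 1 else 0) := by
        rw [hSdef]; exact Finset.card_filter _ _
      refine ⟨S.card / 2, ?_⟩
      omega
    obtain ⟨c, hc⟩ := hcard
    obtain ⟨F, hFs, hFd, hFr⟩ := pairing c S hc
    set L2 : Matrix (Fin n) (Fin n) ℕ := fun a b => L a b + F a b with hL2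
    have hL2ab : ∀ a b, L2 a b = L a b + F a b := fun a b => rfl
    have hL2s : ∀ a b, L2 a b = L2 b a := by
      intro a b; rw [hL2ab, hL2ab, hsym a b, hFs a b]
    have hL2d : ∀ a, L2 a a = 0 := by
      intro a; rw [hL2ab, hdiag a, hFd a]
    have hL2deg : ∀ v, ∑ b, L2 v b = (∑ b, L v b) + (if v ∈ S then 1 else 0) := by
      intro v
      rw [Finset.sum_congr rfl (fun b _ => hL2ab v b), Finset.sum_add_distrib, hFr]
    have hpar : ∀ v, ((∑ b, L2 v b) + (if v = s0 then 1 else 0) + (if v = s0 then 1 else 0)) % 2 = 0 := by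
      intro v
      have h5 := hL2deg v
      have hmem : v ∈ S ↔ (∑ b, L v b) % 2 = 1 := by simp [hSdef]
      by_cases hv : v ∈ S
      · have h6 := hmem.mp hv
        rw [if_pos hv] at h5
        omega
      · have h6 : ¬ ((∑ b, L v b) % 2 = 1) := fun hh => hv (hmem.mpr hh)
        rw [if_neg hv] at h5
        omega
    obtain ⟨A2, hA1, hA2⟩ := orient_even (∑ a, ∑ b, L2 a b) L2 le_rfl hL2s hL2d s0 s0 hpar
    have hbal : ∀ v, ∑ b, A2 v b = ∑ b, A2 b v := by
      intro v; have := hA2 v; omega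
    have hA2deg : ∀ v, (∑ b, A2 v b) + (∑ b, A2 b v) = ∑ b, L2 v b := by
      intro v
      rw [← Finset.sum_add_distrib]
      exact Finset.sum_congr rfl (fun b _ => hA1 v b)
    set G : Matrix (Fin n) (Fin n) ℕ := fun a b =>
      if a < b then min (A2 a b) (F a b) else F a b - min (A2 b a) (F b a) with hGdef
    have hGab : ∀ a b, G a b = if a < b then min (A2 a b) (F a b) else F a b - min (A2 b a) (F b a) :=
      fun a b => rfl
    have hGle : ∀ a b, G a b ≤ A2 a b := by
      intro a b
      rw [hGab]
      split_ifs with h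
      · exact min_le_left _ _
      · rcases eq_or_lt_of_le (not_lt.mp h) with heq | hlt
        · subst heq
          rw [hFd]
          simp
        · have h1 : F a b ≤ A2 a b + A2 b a := by
            have h2 := hA1 a b
            have h3 := hL2ab a b
            omega
          have h3 : F b a = F a b := hFs b a
          rcases le_total (A2 b a) (F b a) with h4 | h4
          · rw [min_eq_left h4]; omega
          · rw [min_eq_right h4]; omega
    have hGsum : ∀ a b, G a b + G b a = F a b := by
      intro a b
      rcases lt_trichotomy a b with h | h | h
      · rw [hGab, hGab, if_pos h, if_neg (asymm h)]
        have h3 : F b a = F a b := hFs b a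
        have h4 : min (A2 a b) (F a b) ≤ F a b := min_le_right _ _
        omega
      · subst h
        rw [hGab, if_neg (lt_irrefl a), hFd]
        simp
      · rw [hGab, hGab, if_neg (asymm h), if_pos h]
        have h3 : F b a = F a b := hFs b a
        have h4 : min (A2 b a) (F b a) ≤ F b a := min_le_right _ _
        omega
    set A : Matrix (Fin n) (Fin n) ℕ := fun a b => A2 a b - G a b with hAdef
    have hAab : ∀ a b, A a b = A2 a b - G a b := fun a b => rfl
    refine ⟨A, fun a b => ?_, fun v => ?_, fun v => ?_⟩
    · rw [hAab, hAab]
      have h1 := hA1 a b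
      have h2 := hGsum a b
      have h3 := hGle a b
      have h4 := hGle b a
      have h5 := hL2ab a b
      omega
    · have h1 : ∑ b, A v b ≤ ∑ b, A2 v b :=
        Finset.sum_le_sum (fun b _ => by rw [hAab]; exact Nat.sub_le _ _)
      have h2 := hA2deg v
      have h3 := hbal v
      have h4 := hL2deg v
      have h5 : (if v ∈ S then 1 else 0) ≤ 1 := by split_ifs <;> omega
      omega
    · have h1 : ∑ b, A b v ≤ ∑ b, A2 b v :=
        Finset.sum_le_sum (fun b _ => by rw [hAab]; exact Nat.sub_le _ _)
      have h2 := hA2deg v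
      have h3 := hbal v
      have h4 := hL2deg v
      have h5 : (if v ∈ S then 1 else 0) ≤ 1 := by split_ifs <;> omega
      omega

/-- Padding: extend a matrix with row/col sums ≤ H to one with row/col sums exactly H. -/
lemma pad (H : ℕ) : ∀ (d : ℕ) (A : Matrix (Fin n) (Fin n) ℕ),
    (∀ i, ∑ j, A i j ≤ H) → (∀ j, ∑ i, A i j ≤ H) →
    n * H ≤ (∑ i, ∑ j, A i j) + d →
    ∃ B : Matrix (Fin n) (Fin n) ℕ, (∀ i j, A i j ≤ B i j) ∧
      (∀ i, ∑ j, B i j = H) ∧ (∀ j, ∑ i, B i j = H) := by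
  intro d
  induction d with
  | zero =>
    intro A hr hc htot
    have h1 : (∑ i, ∑ j, A i j) ≤ n * H := by
      calc (∑ i : Fin n, ∑ j, A i j) ≤ ∑ _i : Fin n, H := Finset.sum_le_sum (fun i _ => hr i)
        _ = n * H := by simp [Finset.sum_const, Finset.card_univ, mul_comm]
    have hcomm : (∑ i, ∑ j, A i j) = ∑ j, ∑ i, A i j := Finset.sum_comm
    refine ⟨A, fun i j => le_rfl, fun i => ?_, fun j => ?_⟩
    · by_contra hne
      have hlt : ∑ j, A i j < H := lt_of_le_of_ne (hr i) hne
      have h2 : (∑ i : Fin n, ∑ j, A i j) < ∑ _i : Fin n, H :=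
        Finset.sum_lt_sum (fun i _ => hr i) ⟨i, mem_univ i, hlt⟩
      have h3 : (∑ _i : Fin n, H : ℕ) = n * H := by
        simp [Finset.sum_const, Finset.card_univ, mul_comm]
      omega
    · by_contra hne
      have hlt : ∑ i, A i j < H := lt_of_le_of_ne (hc j) hne
      have h2 : (∑ j : Fin n, ∑ i, A i j) < ∑ _j : Fin n, H :=
        Finset.sum_lt_sum (fun j _ => hc j) ⟨j, mem_univ j, hlt⟩
      have h3 : (∑ _j : Fin n, H : ℕ) = n * H := by
        simp [Finset.sum_const, Finset.card_univ, mul_comm]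
      omega
  | succ d ihd =>
    intro A hr hc htot
    by_cases hcase : n * H ≤ (∑ i, ∑ j, A i j) + d
    · exact ihd A hr hc hcase
    · push_neg at hcase
      have hni : (∑ _i : Fin n, H : ℕ) = n * H := by
        simp [Finset.sum_const, Finset.card_univ, mul_comm]
      have hex_i : ∃ i, ∑ j, A i j < H := by
        by_contra hno
        push_neg at hno
        have h2 : n * H ≤ ∑ i, ∑ j, A i j := by
          calc n * H = ∑ _i : Fin n, H := hni.symm
            _ ≤ ∑ i, ∑ j, A i j := Finset.sum_le_sum (fun i _ => hno i)
        omega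
      have hex_j : ∃ j, ∑ i, A i j < H := by
        by_contra hno
        push_neg at hno
        have hcomm : (∑ i, ∑ j, A i j) = ∑ j, ∑ i, A i j := Finset.sum_comm
        have h2 : n * H ≤ ∑ j, ∑ i, A i j := by
          calc n * H = ∑ _j : Fin n, H := hni.symm
            _ ≤ ∑ j, ∑ i, A i j := Finset.sum_le_sum (fun j _ => hno j)
        omega
      obtain ⟨i0, hi0⟩ := hex_i
      obtain ⟨j0, hj0⟩ := hex_j
      set A2 : Matrix (Fin n) (Fin n) ℕ := fun i j => A i j + Eij i0 j0 i j with hA2def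
      have hA2ab : ∀ i j, A2 i j = A i j + Eij i0 j0 i j := fun i j => rfl
      have hr' : ∀ i, ∑ j, A2 i j ≤ H := by
        intro i
        rw [Finset.sum_congr rfl (fun j _ => hA2ab i j), Finset.sum_add_distrib, Eij_row]
        by_cases h : i = i0
        · rw [if_pos h]
          have h2 : ∑ j, A i j < H := by rw [h]; exact hi0
          omega
        · rw [if_neg h]; have := hr i; omega
      have hc' : ∀ j, ∑ i, A2 i j ≤ H := by
        intro j
        rw [Finset.sum_congr rfl (fun i _ => hA2ab i j), Finset.sum_add_distrib, Eij_col]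
        by_cases h : j = j0
        · rw [if_pos h]
          have h2 : ∑ i, A i j < H := by rw [h]; exact hj0
          omega
        · rw [if_neg h]; have := hc j; omega
      have htot' : (∑ i, ∑ j, A2 i j) = (∑ i, ∑ j, A i j) + 1 := by
        have h1 : ∀ i, ∑ j, A2 i j = (∑ j, A i j) + ∑ j, Eij i0 j0 i j := by
          intro i
          rw [Finset.sum_congr rfl (fun j _ => hA2ab i j), Finset.sum_add_distrib]
        rw [Finset.sum_congr rfl (fun i _ => h1 i), Finset.sum_add_distrib, Eij_total]
      obtain ⟨B, hAB, hBr, hBc⟩ := ihd A2 hr' hc' (by omega)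
      refine ⟨B, fun i j => ?_, hBr, hBc⟩
      have h1 := hAB i j
      have h2 := hA2ab i j
      omega

/-- König/Birkhoff: a ℕ-matrix with all row and column sums H is a sum of H
sub-permutation matrices. -/
lemma birkhoff : ∀ (H : ℕ) (B : Matrix (Fin n) (Fin n) ℕ),
    (∀ i, ∑ j, B i j = H) → (∀ j, ∑ i, B i j = H) →
    ∃ P : Fin H → Matrix (Fin n) (Fin n) ℕ,
      (∀ h i, ∑ j, P h i j ≤ 1) ∧ (∀ h j, ∑ i, P h i j ≤ 1) ∧
      (∀ i j, ∑ h, P h i j = B i j) := by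
  intro H
  induction H with
  | zero =>
    intro B hr hc
    refine ⟨fun h => h.elim0, fun h => h.elim0, fun h => h.elim0, fun i j => ?_⟩
    have h1 : B i j ≤ ∑ j, B i j :=
      Finset.single_le_sum (fun _ _ => Nat.zero_le _) (mem_univ j)
    rw [hr i] at h1
    simp [Nat.le_zero.mp h1]
  | succ H ihH =>
    intro B hr hc
    classical
    set t : Fin n → Finset (Fin n) := fun i => univ.filter (fun j => 0 < B i j) with ht
    have hall : ∀ (S : Finset (Fin n)), S.card ≤ (S.biUnion t).card := by
      intro S
      have key : S.card * (H + 1) ≤ (S.biUnion t).card * (H + 1) := by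
        calc S.card * (H + 1) = ∑ _i ∈ S, (H + 1) := by rw [Finset.sum_const, smul_eq_mul]
          _ = ∑ i ∈ S, ∑ j, B i j := Finset.sum_congr rfl (fun i _ => (hr i).symm)
          _ = ∑ j : Fin n, ∑ i ∈ S, B i j := Finset.sum_comm
          _ = ∑ j ∈ S.biUnion t, ∑ i ∈ S, B i j := by
              symm
              apply Finset.sum_subset (Finset.subset_univ _)
              intro j _ hj
              apply Finset.sum_eq_zero
              intro i hi
              by_contra hBij
              exact hj (Finset.mem_biUnion.mpr
                ⟨i, hi, by simp [ht, Nat.pos_of_ne_zero hBij]⟩)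
          _ ≤ ∑ j ∈ S.biUnion t, ∑ i : Fin n, B i j :=
              Finset.sum_le_sum (fun j _ =>
                Finset.sum_le_sum_of_subset (Finset.subset_univ S))
          _ = ∑ _j ∈ S.biUnion t, (H + 1) := Finset.sum_congr rfl (fun j _ => hc j)
          _ = (S.biUnion t).card * (H + 1) := by rw [Finset.sum_const, smul_eq_mul]
      exact Nat.le_of_mul_le_mul_right key (Nat.succ_pos H)
    obtain ⟨f, hfinj, hft⟩ := (Finset.all_card_le_biUnion_card_iff_existsInjective' t).mp hall
    have hf : ∀ i, 0 < B i (f i) := by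
      intro i
      have := hft i
      simp [ht] at this
      exact this
    have hfbij : Function.Bijective f := Finite.injective_iff_bijective.mp hfinj
    set e : Fin n ≃ Fin n := Equiv.ofBijective f hfbij with he
    have hef : ∀ i, e i = f i := fun i => rfl
    set P0 : Matrix (Fin n) (Fin n) ℕ := fun i j => if j = f i then 1 else 0 with hP0
    have hP0ij : ∀ i j, P0 i j = if j = f i then 1 else 0 := fun i j => rfl
    have hP0row : ∀ i, ∑ j, P0 i j = 1 := by
      intro i
      rw [Finset.sum_congr rfl (fun j _ => hP0ij i j)]
      simp [Finset.sum_ite_eq']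
    have hP0col : ∀ j, ∑ i, P0 i j = 1 := by
      intro j
      have hiff : ∀ i : Fin n, P0 i j = if i = e.symm j then 1 else 0 := by
        intro i
        rw [hP0ij]
        by_cases h : i = e.symm j
        · subst h
          rw [if_pos rfl, if_pos]
          rw [← hef, Equiv.apply_symm_apply]
        · rw [if_neg h, if_neg]
          intro hji
          apply h
          rw [hji, ← hef, Equiv.symm_apply_apply]
      rw [Finset.sum_congr rfl (fun i _ => hiff i)]
      simp [Finset.sum_ite_eq']
    have hBP : ∀ i j, B i j = (B i j - P0 i j) + P0 i j := by
      intro i j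
      rw [hP0ij]
      split_ifs with h
      · subst h
        have := hf i
        omega
      · omega
    have hB'row : ∀ i, ∑ j, (B i j - P0 i j) = H := by
      intro i
      have h1 : ∑ j, B i j = (∑ j, (B i j - P0 i j)) + ∑ j, P0 i j := by
        rw [← Finset.sum_add_distrib]
        exact Finset.sum_congr rfl (fun j _ => hBP i j)
      rw [hr i, hP0row i] at h1
      omega
    have hB'col : ∀ j, ∑ i, (B i j - P0 i j) = H := by
      intro j
      have h1 : ∑ i, B i j = (∑ i, (B i j - P0 i j)) + ∑ i, P0 i j := by
        rw [← Finset.sum_add_distrib]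
        exact Finset.sum_congr rfl (fun i _ => hBP i j)
      rw [hc j, hP0col j] at h1
      omega
    obtain ⟨P', h1', h2', h3'⟩ := ihH (fun i j => B i j - P0 i j) hB'row hB'col
    refine ⟨Fin.snoc P' P0, ?_, ?_, ?_⟩
    · intro h i
      induction h using Fin.lastCases with
      | last => rw [Fin.snoc_last]; exact (hP0row i).le
      | cast h' => rw [Fin.snoc_castSucc]; exact h1' h' i
    · intro h j
      induction h using Fin.lastCases with
      | last => rw [Fin.snoc_last]; exact (hP0col j).le
      | cast h' => rw [Fin.snoc_castSucc]; exact h2' h' j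
    · intro i j
      rw [Fin.sum_univ_castSucc]
      have hcs : ∀ h' : Fin H, (Fin.snoc P' P0 : Fin (H+1) → Matrix (Fin n) (Fin n) ℕ)
          h'.castSucc i j = P' h' i j := by
        intro h'
        rw [Fin.snoc_castSucc]
      rw [Finset.sum_congr rfl (fun h' _ => hcs h')]
      rw [show (Fin.snoc P' P0 : Fin (H+1) → Matrix (Fin n) (Fin n) ℕ) (Fin.last H) i j
          = P0 i j by rw [Fin.snoc_last]]
      rw [h3' i j]
      exact (hBP i j).symm

/-- Distribute a value a ≤ ∑ p among capacities p. -/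
lemma distribute {ι : Type*} [DecidableEq ι] (s : Finset ι) (p : ι → ℕ) :
    ∀ a : ℕ, a ≤ ∑ i ∈ s, p i → ∃ q : ι → ℕ, (∀ i, q i ≤ p i) ∧ ∑ i ∈ s, q i = a := by
  induction s using Finset.induction_on with
  | empty =>
    intro a ha
    simp at ha
    exact ⟨fun _ => 0, fun i => Nat.zero_le _, by simp [ha]⟩
  | @insert x s hxs ihs =>
    intro a ha
    rw [Finset.sum_insert hxs] at ha
    obtain ⟨q', hq1', hq2'⟩ := ihs (a - min a (p x)) (by omega)
    refine ⟨Function.update q' x (min a (p x)), ?_, ?_⟩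
    · intro i
      by_cases h : i = x
      · subst h
        rw [Function.update_self]
        exact min_le_right _ _
      · rw [Function.update_of_ne h]
        exact hq1' i
    · have hsum : ∑ i ∈ s, Function.update q' x (min a (p x)) i = ∑ i ∈ s, q' i :=
        Finset.sum_congr rfl (fun i hi =>
          Function.update_of_ne (fun h => hxs (by rw [← h]; exact hi)) _ _)
      rw [Finset.sum_insert hxs, Function.update_self, hsum]
      have hm1 : min a (p x) ≤ a := min_le_left _ _
      omega

end CF2

open Finset in
/-- Routing polarization can always be avoided when τ = 2 (Theorem 4). -/
theorem contention_free_tau2 (n K : ℕ) (hK : 0 < K) (hKeven : Even K)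
    (L : Matrix (Fin n) (Fin n) ℕ)
    (hsym : ∀ a b, L a b = L b a) (hdiag : ∀ a, L a a = 0)
    (hrow : ∀ a, ∑ b, L a b ≤ K) :
    ∃ M : Fin (K / 2) → Matrix (Fin n) (Fin n) ℕ,
      (∀ h a b, M h a b = M h b a) ∧
      (∀ a b, ∑ h, M h a b = L a b) ∧
      (∀ h a, (∑ b, M h a b) ≤ 2 ∧ (∑ b, M h b a) ≤ 2) := by
  classical
  have hH2 : K / 2 + K / 2 = K := by
    obtain ⟨m, hm⟩ := hKeven
    omega
  set H := K / 2 with hHdef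
  obtain ⟨A, hA1, hA2, hA3⟩ := CF2.orient L hsym hdiag
  have hArow : ∀ i, ∑ j, A i j ≤ H := by
    intro i
    have h1 := hA2 i
    have h2 := hrow i
    omega
  have hAcol : ∀ j, ∑ i, A i j ≤ H := by
    intro j
    have h1 := hA3 j
    have h2 := hrow j
    omega
  obtain ⟨B, hAB, hBrow, hBcol⟩ := CF2.pad H (n * H) A hArow hAcol (by omega)
  obtain ⟨P, hProw, hPcol, hPsum⟩ := CF2.birkhoff H B hBrow hBcol
  have hle : ∀ i j, A i j ≤ ∑ h, P h i j := by
    intro i j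
    rw [hPsum]
    exact hAB i j
  have hdist := fun i j => CF2.distribute (univ : Finset (Fin H)) (fun h => P h i j) (A i j) (hle i j)
  choose q hq1 hq2 using hdist
  set M : Fin H → Matrix (Fin n) (Fin n) ℕ := fun h a b => q a b h + q b a h with hMdef
  have hMab : ∀ h a b, M h a b = q a b h + q b a h := fun h a b => rfl
  refine ⟨M, fun h a b => by rw [hMab, hMab, Nat.add_comm], fun a b => ?_, fun h a => ?_⟩
  · rw [Finset.sum_congr rfl (fun h _ => hMab h a b), Finset.sum_add_distrib, hq2 a b, hq2 b a]
    exact hA1 a b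
  · have h1 : ∑ b, q a b h ≤ ∑ b, P h a b := Finset.sum_le_sum (fun b _ => hq1 a b h)
    have h2 : ∑ b, q b a h ≤ ∑ b, P h b a := Finset.sum_le_sum (fun b _ => hq1 b a h)
    have h3 := hProw h a
    have h4 := hPcol h a
    have h5 : ∑ b, M h a b = (∑ b, q a b h) + (∑ b, q b a h) := by
      rw [Finset.sum_congr rfl (fun b _ => hMab h a b), Finset.sum_add_distrib]
    have h6 : ∑ b, M h b a = (∑ b, q b a h) + (∑ b, q a b h) := by
      rw [Finset.sum_congr rfl (fun b _ => hMab h b a), Finset.sum_add_distrib]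
    constructor
    · omega
    · omega
end

section
/- Let H be a positive natural number. For every n × n symmetric matrix L with nonnegative integer entries whose diagonal entries are all even, there exist H matrices L^(1), …, L^(H) with nonnegative integer entries such that: (i) each L^(h) is symmetric; (ii) ∑_{h=1}^{H} L^(h)_{ab} = L_{ab} for all a, b; and (iii) for every h and every index a, ∑_b L^(h)_{ab} ≤ 2·⌈(∑_b L_{ab}) / (2H)⌉. -/
open Finset

section
variable {ι : Type*} [Fintype ι] [DecidableEq ι]

private lemma num_core (u v x e : ℕ) (hs : u + v = 2*x + e) (h1 : u ≤ v + 1) (h2 : v ≤ u + 1) :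
    u^2 + v^2 ≤ x^2 + (x+e)^2 ∧ (2 ≤ e → u^2 + v^2 < x^2 + (x+e)^2) := by
  rcases Nat.even_or_odd e with ⟨f, hf⟩ | ⟨f, hf⟩
  · have hu : u = x + f := by omega
    have hv : v = x + f := by omega
    subst hu; subst hv; subst hf
    constructor
    · nlinarith
    · intro he; nlinarith
  · have huv : (u = x + f ∧ v = x + f + 1) ∨ (u = x + f + 1 ∧ v = x + f) := by omega
    subst hf
    rcases huv with ⟨hu, hv⟩ | ⟨hu, hv⟩ <;> subst hu <;> subst hv <;>
      exact ⟨by nlinarith, fun he => by nlinarith⟩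

private lemma num_sq (u v x y : ℕ) (hs : u + v = x + y) (h1 : u ≤ v + 1) (h2 : v ≤ u + 1) :
    u^2 + v^2 ≤ x^2 + y^2 ∧ ((x + 2 ≤ y ∨ y + 2 ≤ x) → u^2 + v^2 < x^2 + y^2) := by
  rcases le_total x y with hxy | hxy
  · obtain ⟨e, he⟩ : ∃ e, y = x + e := ⟨y - x, by omega⟩
    subst he
    have := num_core u v x e (by omega) h1 h2
    exact ⟨this.1, fun hc => this.2 (by omega)⟩
  · obtain ⟨e, he⟩ : ∃ e, x = y + e := ⟨x - y, by omega⟩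
    subst he
    have := num_core u v y e (by omega) h1 h2
    constructor
    · have := this.1; omega
    · intro hc; have := this.2 (by omega); omega

private lemma sum_two_rest {H : ℕ} (h h' : Fin H) (hne : h ≠ h') (F : Fin H → ℕ) :
    (∑ g, F g) = F h + F h' + ∑ g ∈ (Finset.univ.erase h).erase h', F g := by
  rw [← Finset.add_sum_erase _ F (Finset.mem_univ h)]
  rw [← Finset.add_sum_erase _ F (Finset.mem_erase.mpr ⟨Ne.symm hne, Finset.mem_univ h'⟩)]
  ring

private def TIH (N : ℕ) (ι : Type*) [Fintype ι] [DecidableEq ι] : Prop :=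
  ∀ L : ι → ι → ℕ, (∑ a, ∑ b, L a b) ≤ N → (∀ a b, L a b = L b a) →
    (∀ a, Even (L a a)) →
    ∀ u v : ι,
    (∀ a, Even ((∑ b, L a b) + (if a = u then 1 else 0) + (if a = v then 1 else 0))) →
    ∃ A : ι → ι → ℕ, (∀ a b, A a b + A b a = L a b) ∧
      ∀ a, (∑ b, A a b) + (if a = v then 1 else 0)
          = (∑ b, A b a) + (if a = u then 1 else 0)

private lemma lemT_zero (L : ι → ι → ℕ) (h0 : ∀ a b, L a b = 0) (u v : ι)
    (hpar : ∀ a, Even ((∑ b, L a b) + (if a = u then 1 else 0) + (if a = v then 1 else 0))) :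
    ∃ A : ι → ι → ℕ, (∀ a b, A a b + A b a = L a b) ∧
      ∀ a, (∑ b, A a b) + (if a = v then 1 else 0)
          = (∑ b, A b a) + (if a = u then 1 else 0) := by
  have huv : u = v := by
    by_contra h
    have h1 := hpar u
    rw [if_pos rfl, if_neg h] at h1
    simp [h0] at h1
  refine ⟨fun _ _ => 0, by simp [h0], ?_⟩
  intro a; subst huv; simp


private lemma step_offdiag {N : ℕ} (ih : TIH N ι)
    (L : ι → ι → ℕ) (hN : (∑ a, ∑ b, L a b) ≤ N + 1)
    (hsym : ∀ a b, L a b = L b a) (hdiag : ∀ a, Even (L a a))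
    (x y : ι) (hxy : x ≠ y) (hpos : L x y ≠ 0) (v : ι)
    (hpar : ∀ a, Even ((∑ b, L a b) + (if a = x then 1 else 0) + (if a = v then 1 else 0))) :
    ∃ A : ι → ι → ℕ, (∀ a b, A a b + A b a = L a b) ∧
      ∀ a, (∑ b, A a b) + (if a = v then 1 else 0)
          = (∑ b, A b a) + (if a = x then 1 else 0) := by
  classical
  set ind : ι → ι → ℕ := fun a b => if (a = x ∧ b = y) ∨ (a = y ∧ b = x) then 1 else 0 with hind
  set L' : ι → ι → ℕ := fun a b => L a b - ind a b with hL'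
  have hindsym : ∀ a b, ind a b = ind b a := by
    intro a b; simp only [hind]
    exact if_congr (by tauto) rfl rfl
  have hadd : ∀ a b, L a b = L' a b + ind a b := by
    intro a b
    have hle : ind a b ≤ L a b := by
      simp only [hind]
      split
      · rename_i h
        rcases h with ⟨h1, h2⟩ | ⟨h1, h2⟩
        · subst h1; subst h2; omega
        · subst h1; subst h2; rw [hsym]; omega
      · omega
    simp only [hL']; omega
  have hindrow : ∀ a, (∑ b, ind a b) = (if a = x then 1 else 0) + (if a = y then 1 else 0) := by
    intro a
    by_cases hax : a = x
    · subst hax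
      rw [if_pos rfl, if_neg (by tauto : ¬ a = y)]
      have h1 : ∀ b, ind a b = if b = y then 1 else 0 := by
        intro b; simp only [hind]
        exact if_congr (by constructor <;> [rintro (⟨_, h⟩ | ⟨h, _⟩); tauto] <;> tauto) rfl rfl
      rw [Finset.sum_congr rfl (fun b _ => h1 b)]
      simp
    · by_cases hay : a = y
      · subst hay
        rw [if_neg hax, if_pos rfl]
        have h1 : ∀ b, ind a b = if b = x then 1 else 0 := by
          intro b; simp only [hind]
          exact if_congr (by constructor <;> [rintro (⟨h, _⟩ | ⟨_, h⟩); tauto] <;> tauto) rfl rfl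
        rw [Finset.sum_congr rfl (fun b _ => h1 b)]
        simp
      · rw [if_neg hax, if_neg hay]
        have h1 : (∑ b, ind a b) = 0 := by
          apply Finset.sum_eq_zero
          intro b _; simp only [hind]
          rw [if_neg]; rintro (⟨h1, h2⟩ | ⟨h1, h2⟩) <;> tauto
        omega
  have hrowrel : ∀ a, (∑ b, L a b)
      = (∑ b, L' a b) + ((if a = x then 1 else 0) + (if a = y then 1 else 0)) := by
    intro a
    rw [← hindrow a, ← Finset.sum_add_distrib]
    exact Finset.sum_congr rfl (fun b _ => hadd a b)
  have hsym' : ∀ a b, L' a b = L' b a := by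
    intro a b; simp only [hL']; rw [hsym a b, hindsym a b]
  have hdiag' : ∀ a, Even (L' a a) := by
    intro a
    have h0 : ind a a = 0 := by
      simp only [hind]; rw [if_neg]; rintro (⟨h1, h2⟩ | ⟨h1, h2⟩) <;> exact hxy (h1 ▸ h2 ▸ rfl)
    have h2 := hadd a a
    have h3 := hdiag a
    rw [Nat.even_iff] at h3 ⊢
    omega
  have htot' : (∑ a, ∑ b, L' a b) ≤ N := by
    have h1 : (∑ a, ∑ b, L a b)
        = (∑ a, ∑ b, L' a b) + ∑ a, ((if a = x then 1 else 0) + (if a = y then 1 else 0)) := by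
      rw [← Finset.sum_add_distrib]
      exact Finset.sum_congr rfl (fun a _ => hrowrel a)
    have h2 : (∑ a : ι, ((if a = x then 1 else 0) + (if a = y then 1 else 0))) = 2 := by
      rw [Finset.sum_add_distrib]
      simp [Finset.sum_ite_eq']
    omega
  have hpar' : ∀ a, Even ((∑ b, L' a b) + (if a = y then 1 else 0) + (if a = v then 1 else 0)) := by
    intro a
    have h1 := hpar a
    rw [Nat.even_iff] at h1 ⊢
    have h2 := hrowrel a
    omega
  obtain ⟨A', hA'pair, hA'bal⟩ := ih L' htot' hsym' hdiag' y v hpar'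
  refine ⟨fun a b => A' a b + (if a = x ∧ b = y then 1 else 0), ?_, ?_⟩
  · intro a b
    dsimp only
    have h1 := hA'pair a b
    have h2 := hadd a b
    have h3 : (if a = x ∧ b = y then 1 else 0) + (if b = x ∧ a = y then 1 else 0) = ind a b := by
      simp only [hind]
      by_cases hc1 : a = x ∧ b = y
      · have hc2 : ¬(b = x ∧ a = y) := fun h => hxy (by rw [← hc1.1]; exact h.2)
        rw [if_pos hc1, if_neg hc2, if_pos (Or.inl hc1)]
      · by_cases hc2 : b = x ∧ a = y
        · rw [if_neg hc1, if_pos hc2, if_pos (Or.inr ⟨hc2.2, hc2.1⟩)]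
        · rw [if_neg hc1, if_neg hc2, if_neg]
          rintro (h | h)
          · exact hc1 h
          · exact hc2 ⟨h.2, h.1⟩
    omega
  · intro a
    dsimp only
    have hrow : (∑ b, (A' a b + if a = x ∧ b = y then 1 else 0))
        = (∑ b, A' a b) + (if a = x then 1 else 0) := by
      rw [Finset.sum_add_distrib]
      congr 1
      by_cases hax : a = x
      · simp [hax, Finset.sum_ite_eq']
      · simp [hax]
    have hcol : (∑ b, (A' b a + if b = x ∧ a = y then 1 else 0))
        = (∑ b, A' b a) + (if a = y then 1 else 0) := by
      rw [Finset.sum_add_distrib]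
      congr 1
      by_cases hay : a = y
      · simp [hay, Finset.sum_ite_eq']
      · simp [hay]
    rw [hrow, hcol]
    have := hA'bal a
    omega

private lemma step_loop {N : ℕ} (ih : TIH N ι)
    (L : ι → ι → ℕ) (hN : (∑ a, ∑ b, L a b) ≤ N + 1)
    (hsym : ∀ a b, L a b = L b a) (hdiag : ∀ a, Even (L a a))
    (x : ι) (hpos : L x x ≠ 0) (u v : ι)
    (hpar : ∀ a, Even ((∑ b, L a b) + (if a = u then 1 else 0) + (if a = v then 1 else 0))) :
    ∃ A : ι → ι → ℕ, (∀ a b, A a b + A b a = L a b) ∧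
      ∀ a, (∑ b, A a b) + (if a = v then 1 else 0)
          = (∑ b, A b a) + (if a = u then 1 else 0) := by
  classical
  have hxx2 : 2 ≤ L x x := by
    have := hdiag x; rw [Nat.even_iff] at this; omega
  set ind : ι → ι → ℕ := fun a b => if a = x ∧ b = x then 2 else 0 with hind
  set L' : ι → ι → ℕ := fun a b => L a b - ind a b with hL'
  have hadd : ∀ a b, L a b = L' a b + ind a b := by
    intro a b
    have hle : ind a b ≤ L a b := by
      simp only [hind]; split
      · rename_i h; rw [h.1, h.2]; omega
      · omega
    simp only [hL']; omega
  have hindrow : ∀ a, (∑ b, ind a b) = (if a = x then 2 else 0) := by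
    intro a
    by_cases hax : a = x
    · rw [if_pos hax]
      have h1 : ∀ b, ind a b = if b = x then 2 else 0 := by
        intro b; simp only [hind]
        exact if_congr (by simp [hax]) rfl rfl
      rw [Finset.sum_congr rfl (fun b _ => h1 b)]
      simp
    · rw [if_neg hax]
      apply Finset.sum_eq_zero
      intro b _; simp only [hind]
      rw [if_neg]; rintro ⟨h1, h2⟩; exact hax h1
  have hindcol : ∀ a b, ind a b = ind b a := by
    intro a b; simp only [hind]; exact if_congr (by tauto) rfl rfl
  have hrowrel : ∀ a, (∑ b, L a b) = (∑ b, L' a b) + (if a = x then 2 else 0) := by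
    intro a
    rw [← hindrow a, ← Finset.sum_add_distrib]
    exact Finset.sum_congr rfl (fun b _ => hadd a b)
  have hsym' : ∀ a b, L' a b = L' b a := by
    intro a b; simp only [hL']; rw [hsym a b, hindcol a b]
  have hdiag' : ∀ a, Even (L' a a) := by
    intro a
    have h2 := hadd a a
    have h3 := hdiag a
    have h4 : ind a a = if a = x then 2 else 0 := by
      simp only [hind]; exact if_congr (by tauto) rfl rfl
    rw [Nat.even_iff] at h3 ⊢
    by_cases hax : a = x
    · rw [if_pos hax] at h4; omega
    · rw [if_neg hax] at h4; omega
  have htot' : (∑ a, ∑ b, L' a b) ≤ N := by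
    have h1 : (∑ a, ∑ b, L a b)
        = (∑ a, ∑ b, L' a b) + ∑ a, (if a = x then 2 else 0) := by
      rw [← Finset.sum_add_distrib]
      exact Finset.sum_congr rfl (fun a _ => hrowrel a)
    have h2 : (∑ a : ι, (if a = x then 2 else 0)) = 2 := by simp [Finset.sum_ite_eq']
    omega
  have hpar' : ∀ a, Even ((∑ b, L' a b) + (if a = u then 1 else 0) + (if a = v then 1 else 0)) := by
    intro a
    have h1 := hpar a
    have h2 := hrowrel a
    rw [Nat.even_iff] at h1 ⊢
    by_cases hax : a = x
    · rw [if_pos hax] at h2; omega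
    · rw [if_neg hax] at h2; omega
  obtain ⟨A', hA'pair, hA'bal⟩ := ih L' htot' hsym' hdiag' u v hpar'
  refine ⟨fun a b => A' a b + (if a = x ∧ b = x then 1 else 0), ?_, ?_⟩
  · intro a b
    dsimp only
    have h1 := hA'pair a b
    have h2 := hadd a b
    have h4 : (if a = x ∧ b = x then 1 else 0) + (if b = x ∧ a = x then 1 else 0) = ind a b := by
      simp only [hind]
      by_cases hc : a = x ∧ b = x
      · rw [if_pos hc, if_pos ⟨hc.2, hc.1⟩, if_pos hc]
      · rw [if_neg hc, if_neg (fun h => hc ⟨h.2, h.1⟩), if_neg hc]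
    omega
  · intro a
    dsimp only
    have hrow : (∑ b, (A' a b + if a = x ∧ b = x then 1 else 0))
        = (∑ b, A' a b) + (if a = x then 1 else 0) := by
      rw [Finset.sum_add_distrib]
      congr 1
      by_cases hax : a = x
      · simp [hax, Finset.sum_ite_eq']
      · simp [hax]
    have hcol : (∑ b, (A' b a + if b = x ∧ a = x then 1 else 0))
        = (∑ b, A' b a) + (if a = x then 1 else 0) := by
      rw [Finset.sum_add_distrib]
      congr 1
      by_cases hax : a = x
      · simp [hax, Finset.sum_ite_eq']
      · simp [hax]
    rw [hrow, hcol]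
    have := hA'bal a
    omega

private lemma lemT (N : ℕ) : TIH N ι := by
  induction N with
  | zero =>
    intro L hN hsym hdiag u v hpar
    have h0 : ∀ a b, L a b = 0 := by
      intro a b
      have h1 := Finset.sum_eq_zero_iff.mp (Nat.le_zero.mp hN)
      have h2 := Finset.sum_eq_zero_iff.mp (h1 a (mem_univ a))
      exact h2 b (mem_univ b)
    exact lemT_zero L h0 u v hpar
  | succ N ih =>
    intro L hN hsym hdiag u v hpar
    by_cases h0 : ∀ a b, L a b = 0
    · exact lemT_zero L h0 u v hpar
    · push_neg at h0
      obtain ⟨x0, y0, hx0⟩ := h0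
      by_cases huv : u = v
      · subst huv
        by_cases hxy : x0 = y0
        · exact step_loop ih L hN hsym hdiag x0 (by rw [← hxy] at hx0; exact hx0) u u hpar
        · have hpar2 : ∀ a, Even ((∑ b, L a b) + (if a = x0 then 1 else 0)
              + (if a = x0 then 1 else 0)) := by
            intro a
            have h1 := hpar a
            rw [Nat.even_iff] at h1 ⊢
            omega
          obtain ⟨A, hpair, hbal⟩ := step_offdiag ih L hN hsym hdiag x0 y0 hxy hx0 x0 hpar2
          refine ⟨A, hpair, ?_⟩
          intro a
          have := hbal a
          omega
      · have hodd : (∑ b, L u b) % 2 = 1 := by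
          have h1 := hpar u
          rw [if_pos rfl, if_neg huv] at h1
          rw [Nat.even_iff] at h1
          omega
        have hex : ∃ y, y ≠ u ∧ L u y ≠ 0 := by
          by_contra h
          push_neg at h
          have h2 : (∑ b, L u b) = L u u := by
            apply Finset.sum_eq_single u
            · intro b _ hb; exact h b hb
            · intro hu; exact absurd (mem_univ u) hu
          have h3 := hdiag u
          rw [Nat.even_iff] at h3
          omega
        obtain ⟨y1, hyu, hLy⟩ := hex
        exact step_offdiag ih L hN hsym hdiag u y1 (fun h => hyu h.symm) hLy v hpar

private lemma even_tot (L : ι → ι → ℕ) (hsym : ∀ a b, L a b = L b a)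
    (hdiag : ∀ a, Even (L a a)) : Even (∑ a, ∑ b, L a b) := by
  rw [even_iff_two_dvd]
  rw [← ZMod.natCast_eq_zero_iff]
  push_cast
  rw [← Finset.sum_product']
  rw [← Finset.sum_filter_add_sum_filter_not (Finset.univ ×ˢ Finset.univ)
    (fun p => p.1 = p.2) (fun p => (L p.1 p.2 : ZMod 2))]
  have h1 : (∑ p ∈ (Finset.univ ×ˢ Finset.univ).filter (fun p => p.1 = p.2),
      ((L p.1 p.2 : ℕ) : ZMod 2)) = 0 := by
    apply Finset.sum_eq_zero
    intro p hp
    rw [Finset.mem_filter] at hp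
    rw [ZMod.natCast_eq_zero_iff, ← even_iff_two_dvd]
    rw [hp.2]
    exact hdiag p.2
  have h2 : (∑ p ∈ (Finset.univ ×ˢ Finset.univ).filter (fun p => ¬ p.1 = p.2),
      ((L p.1 p.2 : ℕ) : ZMod 2)) = 0 := by
    apply Finset.sum_involution (fun p _ => (p.2, p.1))
    · intro p hp
      show ((L p.1 p.2 : ℕ) : ZMod 2) + ((L p.2 p.1 : ℕ) : ZMod 2) = 0
      rw [hsym p.2 p.1]
      exact CharTwo.add_self_eq_zero _
    · intro p hp hf
      rw [Finset.mem_filter] at hp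
      intro hq
      exact hp.2 (congrArg Prod.fst hq).symm
    · intro p hp
      rw [Finset.mem_filter] at hp ⊢
      exact ⟨Finset.mem_product.mpr ⟨mem_univ _, mem_univ _⟩, fun h => hp.2 h.symm⟩
    · intro p hp; rfl
  rw [h1, h2, add_zero]

/-- Orientation with balanced in/out degrees. -/
private lemma orient (L : ι → ι → ℕ) (hsym : ∀ a b, L a b = L b a)
    (hdiag : ∀ a, Even (L a a)) :
    ∃ A : ι → ι → ℕ, (∀ a b, A a b + A b a = L a b) ∧
      (∀ a, 2 * (∑ b, A a b) ≤ (∑ b, L a b) + 1) ∧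
      (∀ a, 2 * (∑ b, A b a) ≤ (∑ b, L a b) + 1) := by
  classical
  set L1 : Option ι → Option ι → ℕ := fun o1 o2 =>
    match o1, o2 with
    | some a, some b => L a b
    | some a, none => (∑ b, L a b) % 2
    | none, some b => (∑ c, L b c) % 2
    | none, none => 0
    with hL1
  have hsym1 : ∀ o1 o2, L1 o1 o2 = L1 o2 o1 := by
    intro o1 o2
    cases o1 <;> cases o2 <;> simp [hL1] <;> exact hsym _ _
  have hdiag1 : ∀ o, Even (L1 o o) := by
    intro o; cases o <;> simp [hL1]
    exact hdiag _
  have hrow1 : ∀ a : ι, (∑ o, L1 (some a) o) = (∑ b, L a b) + (∑ b, L a b) % 2 := by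
    intro a
    rw [Fintype.sum_option]
    simp only [hL1]
    omega
  have hrownone : (∑ o, L1 none o) = ∑ a, (∑ b, L a b) % 2 := by
    rw [Fintype.sum_option]
    simp [hL1]
  have hpar1 : ∀ o : Option ι, Even ((∑ o2, L1 o o2) + (if o = none then 1 else 0)
      + (if o = none then 1 else 0)) := by
    intro o
    have hev : Even (∑ o2, L1 o o2) := by
      cases o with
      | some a =>
        rw [hrow1 a, Nat.even_iff]
        omega
      | none =>
        rw [hrownone, Nat.even_iff]
        rw [(Finset.sum_nat_mod Finset.univ 2 (fun a => ∑ b, L a b)).symm]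
        have htot := even_tot L hsym hdiag
        rw [Nat.even_iff] at htot
        exact htot
    rw [Nat.even_iff] at hev ⊢
    omega
  obtain ⟨A1, hA1pair, hA1bal⟩ :=
    lemT (ι := Option ι) (∑ o1, ∑ o2, L1 o1 o2) L1 le_rfl hsym1 hdiag1 none none hpar1
  have hbal : ∀ o, (∑ o2, A1 o o2) = (∑ o2, A1 o2 o) := by
    intro o
    have := hA1bal o
    omega
  have hsum : ∀ o, (∑ o2, A1 o o2) + (∑ o2, A1 o2 o) = ∑ o2, L1 o o2 := by
    intro o
    rw [← Finset.sum_add_distrib]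
    exact Finset.sum_congr rfl (fun o2 _ => hA1pair o o2)
  refine ⟨fun a b => A1 (some a) (some b), ?_, ?_, ?_⟩
  · intro a b
    exact hA1pair (some a) (some b)
  · intro a
    dsimp only
    have h1 : (∑ b, A1 (some a) (some b)) ≤ ∑ o2, A1 (some a) o2 := by
      rw [Fintype.sum_option]; omega
    have h2 := hsum (some a)
    have h2b := hbal (some a)
    have h3 := hrow1 a
    omega
  · intro a
    dsimp only
    have h1 : (∑ b, A1 (some b) (some a)) ≤ ∑ o2, A1 o2 (some a) := by
      rw [Fintype.sum_option]; omega
    have h2 := hsum (some a)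
    have h2b := hbal (some a)
    have h3 := hrow1 a
    omega

/-- Balanced halving of a bipartite multigraph (a matrix). -/
private lemma halve (D : ι → ι → ℕ) :
    ∃ P Q : ι → ι → ℕ, (∀ a b, P a b + Q a b = D a b) ∧
      (∀ a, 2 * (∑ b, P a b) ≤ (∑ b, D a b) + 1) ∧
      (∀ a, 2 * (∑ b, Q a b) ≤ (∑ b, D a b) + 1) ∧
      (∀ b, 2 * (∑ a, P a b) ≤ (∑ a, D a b) + 1) ∧
      (∀ b, 2 * (∑ a, Q a b) ≤ (∑ a, D a b) + 1) := by
  classical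
  set Lb : (ι ⊕ ι) → (ι ⊕ ι) → ℕ := fun s t =>
    match s, t with
    | Sum.inl a, Sum.inr b => D a b
    | Sum.inr b, Sum.inl a => D a b
    | _, _ => 0
    with hLb
  have hsym : ∀ s t, Lb s t = Lb t s := by
    intro s t; cases s <;> cases t <;> simp [hLb]
  have hdiag : ∀ s, Even (Lb s s) := by
    intro s; cases s <;> simp [hLb]
  obtain ⟨A, hpair, hrow, hcol⟩ := orient Lb hsym hdiag
  have hrl : ∀ a : ι, (∑ t, Lb (Sum.inl a) t) = ∑ b, D a b := by
    intro a
    rw [Fintype.sum_sum_type]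
    simp [hLb]
  have hrr : ∀ b : ι, (∑ t, Lb (Sum.inr b) t) = ∑ a, D a b := by
    intro b
    rw [Fintype.sum_sum_type]
    simp [hLb]
  refine ⟨fun a b => A (Sum.inl a) (Sum.inr b), fun a b => A (Sum.inr b) (Sum.inl a),
    ?_, ?_, ?_, ?_, ?_⟩
  · intro a b
    have h1 := hpair (Sum.inl a) (Sum.inr b)
    simpa [hLb] using h1
  · intro a
    dsimp only
    have h1 : (∑ b, A (Sum.inl a) (Sum.inr b)) ≤ ∑ t, A (Sum.inl a) t := by
      rw [Fintype.sum_sum_type]; omega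
    have h2 := hrow (Sum.inl a)
    have h3 := hrl a
    omega
  · intro a
    dsimp only
    have h1 : (∑ b, A (Sum.inr b) (Sum.inl a)) ≤ ∑ t, A t (Sum.inl a) := by
      rw [Fintype.sum_sum_type]; omega
    have h2 := hcol (Sum.inl a)
    have h3 := hrl a
    omega
  · intro b
    dsimp only
    have h1 : (∑ a, A (Sum.inl a) (Sum.inr b)) ≤ ∑ t, A t (Sum.inr b) := by
      rw [Fintype.sum_sum_type]; omega
    have h2 := hcol (Sum.inr b)
    have h3 := hrr b
    omega
  · intro b
    dsimp only
    have h1 : (∑ a, A (Sum.inr b) (Sum.inl a)) ≤ ∑ t, A (Sum.inr b) t := by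
      rw [Fintype.sum_sum_type]; omega
    have h2 := hrow (Sum.inr b)
    have h3 := hrr b
    omega

private def Phi {H : ℕ} (C : Fin H → ι → ι → ℕ) : ℕ :=
  ∑ g, ∑ a, ((∑ b, C g a b)^2 + (∑ b, C g b a)^2)

private lemma rebalance {H : ℕ} (C : Fin H → ι → ι → ℕ) (h h' : Fin H) (hne : h ≠ h')
    (a0 : ι)
    (hv : ((∑ b, C h' a0 b) + 2 ≤ (∑ b, C h a0 b)) ∨
          ((∑ b, C h' b a0) + 2 ≤ (∑ b, C h b a0))) :
    ∃ C' : Fin H → ι → ι → ℕ, (∀ a b, (∑ g, C' g a b) = ∑ g, C g a b) ∧ Phi C' < Phi C := by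
  classical
  set D : ι → ι → ℕ := fun a b => C h a b + C h' a b with hD
  obtain ⟨P, Q, hpair, hP1, hQ1, hP2, hQ2⟩ := halve D
  set C' : Fin H → ι → ι → ℕ := fun g => if g = h then P else if g = h' then Q else C g with hC'
  have hCh : C' h = P := by simp [hC']
  have hCh' : C' h' = Q := by simp [hC', Ne.symm hne, hne]
  have hCg : ∀ g, g ≠ h → g ≠ h' → C' g = C g := by
    intro g hg1 hg2; simp [hC', hg1, hg2]
  -- row sums of the pair
  have hrowD : ∀ a, (∑ b, D a b) = (∑ b, C h a b) + (∑ b, C h' a b) := by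
    intro a; rw [hD]; exact Finset.sum_add_distrib
  have hcolD : ∀ a, (∑ b, D b a) = (∑ b, C h b a) + (∑ b, C h' b a) := by
    intro a; rw [hD]; exact Finset.sum_add_distrib
  have hrowPQ : ∀ a, (∑ b, P a b) + (∑ b, Q a b) = (∑ b, D a b) := by
    intro a; rw [← Finset.sum_add_distrib]; exact Finset.sum_congr rfl (fun b _ => hpair a b)
  have hcolPQ : ∀ a, (∑ b, P b a) + (∑ b, Q b a) = (∑ b, D b a) := by
    intro a; rw [← Finset.sum_add_distrib]; exact Finset.sum_congr rfl (fun b _ => hpair b a)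
  refine ⟨C', ?_, ?_⟩
  · intro a b
    rw [sum_two_rest h h' hne (fun g => C' g a b), sum_two_rest h h' hne (fun g => C g a b)]
    have hrest : (∑ g ∈ (Finset.univ.erase h).erase h', C' g a b)
        = ∑ g ∈ (Finset.univ.erase h).erase h', C g a b := by
      apply Finset.sum_congr rfl
      intro g hg
      rw [Finset.mem_erase, Finset.mem_erase] at hg
      rw [hCg g hg.2.1 hg.1]
    have h1 := hpair a b
    rw [hCh, hCh', hrest]
    have : D a b = C h a b + C h' a b := rfl
    omega
  · rw [Phi, Phi]
    rw [sum_two_rest h h' hne, sum_two_rest h h' hne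
      (fun g => ∑ a, ((∑ b, C g a b)^2 + (∑ b, C g b a)^2))]
    have hrest : (∑ g ∈ (Finset.univ.erase h).erase h',
          ∑ a, ((∑ b, C' g a b)^2 + (∑ b, C' g b a)^2))
        = ∑ g ∈ (Finset.univ.erase h).erase h',
          ∑ a, ((∑ b, C g a b)^2 + (∑ b, C g b a)^2) := by
      apply Finset.sum_congr rfl
      intro g hg
      rw [Finset.mem_erase, Finset.mem_erase] at hg
      rw [hCg g hg.2.1 hg.1]
    rw [hCh, hCh', hrest]
    have hkey : (∑ a, ((∑ b, P a b)^2 + (∑ b, P b a)^2))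
        + (∑ a, ((∑ b, Q a b)^2 + (∑ b, Q b a)^2))
        < (∑ a, ((∑ b, C h a b)^2 + (∑ b, C h b a)^2))
        + (∑ a, ((∑ b, C h' a b)^2 + (∑ b, C h' b a)^2)) := by
      rw [← Finset.sum_add_distrib, ← Finset.sum_add_distrib]
      have hmain : ∀ a : ι,
          ((∑ b, P a b)^2 + (∑ b, Q a b)^2 ≤ (∑ b, C h a b)^2 + (∑ b, C h' a b)^2
            ∧ ((∑ b, C h a b) + 2 ≤ (∑ b, C h' a b) ∨ (∑ b, C h' a b) + 2 ≤ (∑ b, C h a b) →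
              (∑ b, P a b)^2 + (∑ b, Q a b)^2 < (∑ b, C h a b)^2 + (∑ b, C h' a b)^2))
          ∧ ((∑ b, P b a)^2 + (∑ b, Q b a)^2 ≤ (∑ b, C h b a)^2 + (∑ b, C h' b a)^2
            ∧ ((∑ b, C h b a) + 2 ≤ (∑ b, C h' b a) ∨ (∑ b, C h' b a) + 2 ≤ (∑ b, C h b a) →
              (∑ b, P b a)^2 + (∑ b, Q b a)^2 < (∑ b, C h b a)^2 + (∑ b, C h' b a)^2)) := by
        intro a
        have hd1 := hP1 a
        have hd2 := hQ1 a
        have hd3 := hrowPQ a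
        have hd4 := hrowD a
        have he1 := hP2 a
        have he2 := hQ2 a
        have he3 := hcolPQ a
        have he4 := hcolD a
        constructor
        · exact num_sq _ _ _ _ (by omega) (by omega) (by omega)
        · exact num_sq _ _ _ _ (by omega) (by omega) (by omega)
      apply Finset.sum_lt_sum
      · intro a _
        have h1 := (hmain a).1.1
        have h2 := (hmain a).2.1
        omega
      · refine ⟨a0, Finset.mem_univ a0, ?_⟩
        rcases hv with hv | hv
        · have h1 := (hmain a0).1.2 (Or.inr hv)
          have h2 := (hmain a0).2.1
          omega
        · have h1 := (hmain a0).2.2 (Or.inr hv)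
          have h2 := (hmain a0).1.1
          omega
    omega

private lemma lemG_aux {H : ℕ} (P0 : ℕ) :
    ∀ C : Fin H → ι → ι → ℕ, Phi C ≤ P0 →
    ∃ B : Fin H → ι → ι → ℕ,
      (∀ a b, (∑ h, B h a b) = ∑ h, C h a b) ∧
      (∀ h h' a, (∑ b, B h a b) ≤ (∑ b, B h' a b) + 1) ∧
      (∀ h h' a, (∑ b, B h b a) ≤ (∑ b, B h' b a) + 1) := by
  induction P0 with
  | zero =>
    intro C hC
    refine ⟨C, fun a b => rfl, ?_, ?_⟩
    · intro h h' a
      have h1 : (∑ b, C h a b)^2 + (∑ b, C h b a)^2 ≤ Phi C := by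
        rw [Phi]
        calc (∑ b, C h a b)^2 + (∑ b, C h b a)^2
            ≤ ∑ a', ((∑ b, C h a' b)^2 + (∑ b, C h b a')^2) :=
              Finset.single_le_sum
                (f := fun a' => (∑ b, C h a' b)^2 + (∑ b, C h b a')^2)
                (fun a' _ => Nat.zero_le _) (Finset.mem_univ a)
          _ ≤ _ := Finset.single_le_sum
              (f := fun g => ∑ a', ((∑ b, C g a' b)^2 + (∑ b, C g b a')^2))
              (fun g _ => Nat.zero_le _) (Finset.mem_univ h)
      have h2 : (∑ b, C h a b) = 0 := by
        have := Nat.le_zero.mp (le_trans h1 hC)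
        have h3 : (∑ b, C h a b)^2 = 0 := by omega
        exact pow_eq_zero_iff (by norm_num) |>.mp h3
      omega
    · intro h h' a
      have h1 : (∑ b, C h a b)^2 + (∑ b, C h b a)^2 ≤ Phi C := by
        rw [Phi]
        calc (∑ b, C h a b)^2 + (∑ b, C h b a)^2
            ≤ ∑ a', ((∑ b, C h a' b)^2 + (∑ b, C h b a')^2) :=
              Finset.single_le_sum
                (f := fun a' => (∑ b, C h a' b)^2 + (∑ b, C h b a')^2)
                (fun a' _ => Nat.zero_le _) (Finset.mem_univ a)
          _ ≤ _ := Finset.single_le_sum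
              (f := fun g => ∑ a', ((∑ b, C g a' b)^2 + (∑ b, C g b a')^2))
              (fun g _ => Nat.zero_le _) (Finset.mem_univ h)
      have h2 : (∑ b, C h b a) = 0 := by
        have := Nat.le_zero.mp (le_trans h1 hC)
        have h3 : (∑ b, C h b a)^2 = 0 := by omega
        exact pow_eq_zero_iff (by norm_num) |>.mp h3
      omega
  | succ P0 ih =>
    intro C hC
    by_cases hb1 : ∀ h h' a, (∑ b, C h a b) ≤ (∑ b, C h' a b) + 1
    · by_cases hb2 : ∀ h h' a, (∑ b, C h b a) ≤ (∑ b, C h' b a) + 1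
      · exact ⟨C, fun a b => rfl, hb1, hb2⟩
      · push_neg at hb2
        obtain ⟨h, h', a0, hv⟩ := hb2
        have hne : h ≠ h' := by
          intro he; subst he; omega
        obtain ⟨C', hC'sum, hC'phi⟩ := rebalance C h h' hne a0 (Or.inr (by omega))
        obtain ⟨B, hB1, hB2, hB3⟩ := ih C' (by omega)
        refine ⟨B, ?_, hB2, hB3⟩
        intro a b
        rw [hB1 a b, hC'sum a b]
    · push_neg at hb1
      obtain ⟨h, h', a0, hv⟩ := hb1
      have hne : h ≠ h' := by
        intro he; subst he; omega
      obtain ⟨C', hC'sum, hC'phi⟩ := rebalance C h h' hne a0 (Or.inl (by omega))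
      obtain ⟨B, hB1, hB2, hB3⟩ := ih C' (by omega)
      refine ⟨B, ?_, hB2, hB3⟩
      intro a b
      rw [hB1 a b, hC'sum a b]

/-- Decomposition of a matrix into H parts with balanced row and column sums. -/
private lemma lemG {H : ℕ} (hH : 0 < H) (A : ι → ι → ℕ) :
    ∃ B : Fin H → ι → ι → ℕ, (∀ a b, (∑ h, B h a b) = A a b) ∧
      (∀ h a, H * (∑ b, B h a b) ≤ (∑ b, A a b) + (H - 1)) ∧
      (∀ h a, H * (∑ b, B h b a) ≤ (∑ b, A b a) + (H - 1)) := by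
  classical
  set C0 : Fin H → ι → ι → ℕ := fun g => if g = (⟨0, hH⟩ : Fin H) then A else (fun _ _ => 0)
    with hC0
  have hC0sum : ∀ a b, (∑ g, C0 g a b) = A a b := by
    intro a b
    have : ∀ g, C0 g a b = if g = (⟨0, hH⟩ : Fin H) then A a b else 0 := by
      intro g; simp only [hC0]; split <;> rfl
    rw [Finset.sum_congr rfl (fun g _ => this g)]
    simp [Finset.sum_ite_eq']
  obtain ⟨B, hB1, hB2, hB3⟩ := lemG_aux (Phi C0) C0 le_rfl
  have hBsum : ∀ a b, (∑ h, B h a b) = A a b := by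
    intro a b; rw [hB1 a b, hC0sum a b]
  refine ⟨B, hBsum, ?_, ?_⟩
  · intro h a
    have hrow : (∑ g, ∑ b, B g a b) = ∑ b, A a b := by
      rw [Finset.sum_comm]
      exact Finset.sum_congr rfl (fun b _ => hBsum a b)
    have h1 : ∑ g ∈ Finset.univ.erase h, (∑ b, B h a b)
        ≤ ∑ g ∈ Finset.univ.erase h, ((∑ b, B g a b) + 1) :=
      Finset.sum_le_sum (fun g _ => hB2 h g a)
    rw [Finset.sum_const, Finset.sum_add_distrib, Finset.sum_const] at h1
    rw [Finset.card_erase_of_mem (Finset.mem_univ h), Finset.card_univ, Fintype.card_fin] at h1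
    have h2 : (∑ g ∈ Finset.univ.erase h, ∑ b, B g a b) + (∑ b, B h a b)
        = ∑ b, A a b := by
      rw [← hrow, Finset.sum_erase_add _ _ (Finset.mem_univ h)]
    simp only [smul_eq_mul, mul_one] at h1
    obtain ⟨m, rfl⟩ : ∃ m, H = m + 1 := ⟨H - 1, by omega⟩
    simp only [Nat.add_sub_cancel] at h1 ⊢
    have hmul : (m+1) * (∑ b, B h a b) = m * (∑ b, B h a b) + (∑ b, B h a b) := by ring
    omega
  · intro h a
    have hrow : (∑ g, ∑ b, B g b a) = ∑ b, A b a := by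
      rw [Finset.sum_comm]
      exact Finset.sum_congr rfl (fun b _ => hBsum b a)
    have h1 : ∑ g ∈ Finset.univ.erase h, (∑ b, B h b a)
        ≤ ∑ g ∈ Finset.univ.erase h, ((∑ b, B g b a) + 1) :=
      Finset.sum_le_sum (fun g _ => hB3 h g a)
    rw [Finset.sum_const, Finset.sum_add_distrib, Finset.sum_const] at h1
    rw [Finset.card_erase_of_mem (Finset.mem_univ h), Finset.card_univ, Fintype.card_fin] at h1
    have h2 : (∑ g ∈ Finset.univ.erase h, ∑ b, B g b a) + (∑ b, B h b a)
        = ∑ b, A b a := by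
      rw [← hrow, Finset.sum_erase_add _ _ (Finset.mem_univ h)]
    simp only [smul_eq_mul, mul_one] at h1
    obtain ⟨m, rfl⟩ : ∃ m, H = m + 1 := ⟨H - 1, by omega⟩
    simp only [Nat.add_sub_cancel] at h1 ⊢
    have hmul : (m+1) * (∑ b, B h b a) = m * (∑ b, B h b a) + (∑ b, B h b a) := by ring
    omega

end

/-- General per-spine row-sum bound from the proof of Theorem 4. -/
theorem symmetric_decomposition_row_bound (n H : ℕ) (hH : 0 < H)
    (L : Matrix (Fin n) (Fin n) ℕ)
    (hsym : ∀ a b, L a b = L b a) (hdiag : ∀ a, Even (L a a)) :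
    ∃ M : Fin H → Matrix (Fin n) (Fin n) ℕ,
      (∀ h a b, M h a b = M h b a) ∧
      (∀ a b, ∑ h, M h a b = L a b) ∧
      (∀ h a, (∑ b, M h a b) ≤ 2 * (((∑ b, L a b) + 2 * H - 1) / (2 * H))) := by
  obtain ⟨A, hpair, hrowA, hcolA⟩ := orient (fun a b => L a b) hsym hdiag
  obtain ⟨B, hBsum, hB2, hB3⟩ := lemG hH A
  refine ⟨fun h => fun a b => B h a b + B h b a, ?_, ?_, ?_⟩
  · intro h a b
    exact Nat.add_comm _ _
  · intro a b
    show (∑ h, (B h a b + B h b a)) = L a b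
    rw [Finset.sum_add_distrib, hBsum a b, hBsum b a]
    exact hpair a b
  · intro h a
    show (∑ b, (B h a b + B h b a)) ≤ 2 * (((∑ b, L a b) + 2 * H - 1) / (2 * H))
    rw [Finset.sum_add_distrib]
    have h1 := hB2 h a
    have h2 := hB3 h a
    have h3 := hrowA a
    have h4 := hcolA a
    have e1 : (∑ b, B h a b) * (2 * H) = 2 * (H * (∑ b, B h a b)) := by ring
    have e2 : (∑ b, B h b a) * (2 * H) = 2 * (H * (∑ b, B h b a)) := by ring
    have e3 : ∀ b, A b a + A a b = L a b := fun b => by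
      have := hpair b a; have := hsym a b; omega
    have e4 : (∑ b, A b a) + (∑ b, A a b) = ∑ b, L a b := by
      rw [← Finset.sum_add_distrib]
      exact Finset.sum_congr rfl (fun b _ => e3 b)
    have hq1 : (∑ b, B h a b) ≤ ((∑ b, L a b) + 2 * H - 1) / (2 * H) := by
      rw [Nat.le_div_iff_mul_le (by omega)]
      omega
    have hq2 : (∑ b, B h b a) ≤ ((∑ b, L a b) + 2 * H - 1) / (2 * H) := by
      rw [Nat.le_div_iff_mul_le (by omega)]
      omega
    omega
end

section
/- Let H be a positive even natural number. For every n × n symmetric matrix L with nonnegative integer entries, zero diagonal, and every row sum at most H/2 (i.e., ∑_b L_{ab} ≤ H/2 for all a), there exist H matrices L^(1), …, L^(H) with nonnegative integer entries such that: (i) each L^(h) is symmetric; (ii) ∑_{h=1}^{H} L^(h)_{ab} = L_{ab} for all a, b; and (iii) for every h and every index a, ∑_b L^(h)_{ab} ≤ 1 and ∑_b L^(h)_{ba} ≤ 1. -/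
open Finset

private lemma card_filter_ne_le_sum {H : ℕ} (f : Fin H → ℕ) :
    (Finset.univ.filter fun h => f h ≠ 0).card ≤ ∑ h, f h := by
  calc (Finset.univ.filter fun h => f h ≠ 0).card
      = ∑ h ∈ Finset.univ.filter fun h => f h ≠ 0, 1 := by simp
    _ ≤ ∑ h ∈ Finset.univ.filter fun h => f h ≠ 0, f h :=
        Finset.sum_le_sum (fun h hh => by simp at hh; omega)
    _ ≤ ∑ h, f h := Finset.sum_le_sum_of_subset (Finset.filter_subset _ _)

private lemma cf_aux (n H : ℕ) (hH2 : 2 ≤ H) :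
    ∀ N (L : Matrix (Fin n) (Fin n) ℕ),
      (∑ a, ∑ b, L a b) ≤ N →
      (∀ a b, L a b = L b a) → (∀ a, L a a = 0) → (∀ a, ∑ b, L a b ≤ H / 2) →
      ∃ M : Fin H → Matrix (Fin n) (Fin n) ℕ,
        (∀ h a b, M h a b = M h b a) ∧
        (∀ a b, ∑ h, M h a b = L a b) ∧
        (∀ h a, (∑ b, M h a b) ≤ 1 ∧ (∑ b, M h b a) ≤ 1) := by
  intro N
  induction N with
  | zero =>
    intro L hle _ _ _
    refine ⟨fun _ => 0, by simp [Matrix.zero_apply], fun a b => ?_, by simp⟩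
    have h0 : L a b = 0 := by
      have := Finset.sum_eq_zero_iff.mp (Nat.le_zero.mp hle) a (mem_univ a)
      exact Finset.sum_eq_zero_iff.mp this b (mem_univ b)
    simp [h0]
  | succ N ih =>
    intro L hle hsym hdiag hrow
    by_cases h0 : ∀ a b, L a b = 0
    · exact ⟨fun _ => 0, by simp, fun a b => by simp [h0], by simp⟩
    push_neg at h0
    obtain ⟨a, b, hab0⟩ := h0
    have hab : a ≠ b := by
      rintro rfl; exact hab0 (hdiag a)
    have hLab : 1 ≤ L a b := Nat.one_le_iff_ne_zero.mpr hab0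
    have hLba : 1 ≤ L b a := by rw [← hsym a b]; exact hLab
    set P : Fin n → Fin n → Prop := fun x y => (x = a ∧ y = b) ∨ (x = b ∧ y = a) with hP
    have hPdec : ∀ x y, Decidable (P x y) := fun x y => by
      unfold P; infer_instance
    set L' : Matrix (Fin n) (Fin n) ℕ :=
      fun x y => L x y - (if (x = a ∧ y = b) ∨ (x = b ∧ y = a) then 1 else 0) with hL'
    have hL'le : ∀ x y, L' x y ≤ L x y := fun x y => Nat.sub_le _ _
    have hL'ab : L' a b = L a b - 1 := by simp [hL']
    have hL'ba : L' b a = L b a - 1 := by simp [hL']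
    have hL'off : ∀ x y, ¬ ((x = a ∧ y = b) ∨ (x = b ∧ y = a)) → L' x y = L x y := by
      intro x y hxy; simp [hL', hxy]
    -- row sums of L'
    have hrowa : ∑ c, L' a c + 1 = ∑ c, L a c := by
      have h1 : L a b + ∑ c ∈ univ.erase b, L a c = ∑ c, L a c :=
        Finset.add_sum_erase _ _ (mem_univ b)
      have h2 : L' a b + ∑ c ∈ univ.erase b, L' a c = ∑ c, L' a c :=
        Finset.add_sum_erase _ _ (mem_univ b)
      have heq : ∑ c ∈ univ.erase b, L' a c = ∑ c ∈ univ.erase b, L a c := by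
        refine Finset.sum_congr rfl (fun c hc => ?_)
        have hcb : c ≠ b := (Finset.mem_erase.mp hc).1
        exact hL'off a c (by tauto)
      omega
    have hrowb : ∑ c, L' b c + 1 = ∑ c, L b c := by
      have h1 : L b a + ∑ c ∈ univ.erase a, L b c = ∑ c, L b c :=
        Finset.add_sum_erase _ _ (mem_univ a)
      have h2 : L' b a + ∑ c ∈ univ.erase a, L' b c = ∑ c, L' b c :=
        Finset.add_sum_erase _ _ (mem_univ a)
      have heq : ∑ c ∈ univ.erase a, L' b c = ∑ c ∈ univ.erase a, L b c := by
        refine Finset.sum_congr rfl (fun c hc => ?_)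
        have hca : c ≠ a := (Finset.mem_erase.mp hc).1
        exact hL'off b c (by tauto)
      omega
    have hrowother : ∀ x, x ≠ a → x ≠ b → ∑ c, L' x c = ∑ c, L x c := by
      intro x hxa hxb
      refine Finset.sum_congr rfl (fun c _ => hL'off x c (by tauto))
    -- hypotheses for L'
    have hsym' : ∀ x y, L' x y = L' y x := by
      intro x y
      simp only [hL']
      rw [hsym x y]
      congr 1
      by_cases hxy : (x = a ∧ y = b) ∨ (x = b ∧ y = a) <;>
        [rw [if_pos hxy, if_pos (by tauto)]; rw [if_neg hxy, if_neg (by tauto)]]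
    have hdiag' : ∀ x, L' x x = 0 := by
      intro x
      have : ¬ ((x = a ∧ x = b) ∨ (x = b ∧ x = a)) := by
        rintro (⟨rfl, rfl⟩ | ⟨rfl, rfl⟩) <;> exact hab rfl
      rw [hL'off x x this, hdiag]
    have hrow' : ∀ x, ∑ c, L' x c ≤ H / 2 := by
      intro x
      by_cases hxa : x = a
      · subst hxa; have := hrow x; omega
      by_cases hxb : x = b
      · subst hxb; have := hrow x; omega
      rw [hrowother x hxa hxb]; exact hrow x
    have hle' : ∑ x, ∑ y, L' x y ≤ N := by
      have hlt : ∑ x, (∑ y, L' x y) < ∑ x, (∑ y, L x y) := by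
        refine Finset.sum_lt_sum (fun x _ => Finset.sum_le_sum fun y _ => hL'le x y)
          ⟨a, mem_univ a, ?_⟩
        omega
      omega
    obtain ⟨M', hMsym, hMsum, hMrow⟩ := ih L' hle' hsym' hdiag' hrow'
    -- pick a color h free at a and b
    set S1 := Finset.univ.filter fun h => (∑ c, M' h a c) ≠ 0 with hS1def
    set S2 := Finset.univ.filter fun h => (∑ c, M' h b c) ≠ 0 with hS2def
    have hS1 : S1.card ≤ ∑ c, L' a c := by
      calc S1.card ≤ ∑ h, ∑ c, M' h a c := card_filter_ne_le_sum _
        _ = ∑ c, ∑ h, M' h a c := Finset.sum_comm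
        _ = ∑ c, L' a c := Finset.sum_congr rfl (fun c _ => hMsum a c)
    have hS2 : S2.card ≤ ∑ c, L' b c := by
      calc S2.card ≤ ∑ h, ∑ c, M' h b c := card_filter_ne_le_sum _
        _ = ∑ c, ∑ h, M' h b c := Finset.sum_comm
        _ = ∑ c, L' b c := Finset.sum_congr rfl (fun c _ => hMsum b c)
    have hH2' : 1 ≤ H / 2 := by omega
    have hcard : (S1 ∪ S2).card < H := by
      have := Finset.card_union_le S1 S2
      have ha := hrow a; have hb := hrow b
      omega
    have hexh : ∃ h : Fin H, h ∉ S1 ∪ S2 := by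
      by_contra hc
      push_neg at hc
      have hsub : (Finset.univ : Finset (Fin H)) ⊆ S1 ∪ S2 := fun h _ => hc h
      have := Finset.card_le_card hsub
      simp [Finset.card_fin] at this
      omega
    obtain ⟨h, hh⟩ := hexh
    rw [Finset.mem_union, not_or] at hh
    have hfa : ∑ c, M' h a c = 0 := by
      have := hh.1; simp [hS1def] at this
      exact Finset.sum_eq_zero fun c _ => this c
    have hfb : ∑ c, M' h b c = 0 := by
      have := hh.2; simp [hS2def] at this
      exact Finset.sum_eq_zero fun c _ => this c
    -- construct M
    refine ⟨fun hh x y => M' hh x y +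
      (if hh = h ∧ ((x = a ∧ y = b) ∨ (x = b ∧ y = a)) then 1 else 0), ?_, ?_, ?_⟩
    · intro hh x y
      dsimp only
      rw [hMsym hh x y]
      congr 1
      by_cases hc : hh = h ∧ ((x = a ∧ y = b) ∨ (x = b ∧ y = a)) <;>
        [rw [if_pos hc, if_pos (by tauto)]; rw [if_neg hc, if_neg (by tauto)]]
    · intro x y
      dsimp only
      rw [Finset.sum_add_distrib, hMsum x y]
      have hsum : ∑ hh : Fin H, (if hh = h ∧ ((x = a ∧ y = b) ∨ (x = b ∧ y = a)) then 1 else 0)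
          = if (x = a ∧ y = b) ∨ (x = b ∧ y = a) then 1 else 0 := by
        by_cases hxy : (x = a ∧ y = b) ∨ (x = b ∧ y = a)
        · simp [hxy]
        · simp [hxy]
      rw [hsum]
      by_cases hxy : (x = a ∧ y = b) ∨ (x = b ∧ y = a)
      · rw [if_pos hxy]
        rcases hxy with ⟨rfl, rfl⟩ | ⟨rfl, rfl⟩ <;> omega
      · rw [if_neg hxy, hL'off x y hxy]
        omega
    · -- row and column bounds
      have hrowM : ∀ hh x, ∑ y, (M' hh x y +
          (if hh = h ∧ ((x = a ∧ y = b) ∨ (x = b ∧ y = a)) then 1 else 0)) ≤ 1 := by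
        intro hh x
        rw [Finset.sum_add_distrib]
        have hfa0 : ∀ c, M' h a c = 0 := fun c => Finset.sum_eq_zero_iff.mp hfa c (mem_univ c)
        have hfb0 : ∀ c, M' h b c = 0 := fun c => Finset.sum_eq_zero_iff.mp hfb c (mem_univ c)
        by_cases hhh : hh = h
        · by_cases hxa : x = a
          · simp [hxa, hhh, hab, hfa0]
          · by_cases hxb : x = b
            · simp [hxb, hhh, hab, Ne.symm hab, hfb0]
            · simpa [hxa, hxb] using (hMrow hh x).1
        · have h2 : ∀ y, (if hh = h ∧ ((x = a ∧ y = b) ∨ (x = b ∧ y = a)) then 1 else 0) = 0 := by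
            intro y; rw [if_neg]; tauto
          rw [Finset.sum_congr rfl fun y _ => h2 y]
          simpa using (hMrow hh x).1
      intro hh x
      dsimp only
      constructor
      · exact hrowM hh x
      · have : ∀ y, M' hh y x + (if hh = h ∧ ((y = a ∧ x = b) ∨ (y = b ∧ x = a)) then 1 else 0)
            = M' hh x y + (if hh = h ∧ ((x = a ∧ y = b) ∨ (x = b ∧ y = a)) then 1 else 0) := by
          intro y
          rw [hMsym hh y x]
          congr 1
          exact if_congr (by tauto) rfl rfl
        rw [Finset.sum_congr rfl fun y _ => this y]
        exact hrowM hh x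

/-- Contention-free feasibility when τ = 1 and row sums are at most K_leaf/2 (Theorem 5). -/
theorem contention_free_tau1 (n H : ℕ) (hH : 0 < H) (hHeven : Even H)
    (L : Matrix (Fin n) (Fin n) ℕ)
    (hsym : ∀ a b, L a b = L b a) (hdiag : ∀ a, L a a = 0)
    (hrow : ∀ a, ∑ b, L a b ≤ H / 2) :
    ∃ M : Fin H → Matrix (Fin n) (Fin n) ℕ,
      (∀ h a b, M h a b = M h b a) ∧
      (∀ a b, ∑ h, M h a b = L a b) ∧
      (∀ h a, (∑ b, M h a b) ≤ 1 ∧ (∑ b, M h b a) ≤ 1) := by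
  obtain ⟨k, hk⟩ := hHeven
  exact cf_aux n H (by omega) _ L le_rfl hsym hdiag hrow
end

section
/- Let K be a positive even natural number. For every n × n symmetric matrix L with nonnegative integer entries, zero diagonal, and every row sum at most K (i.e., ∑_b L_{ab} ≤ K for all a), there exist K matrices L^(1), …, L^(K) with nonnegative integer entries such that: (i) each L^(h) is symmetric; (ii) ∑_{h=1}^{K} L^(h)_{ab} = L_{ab} for all a, b; and (iii) for every h and every index a, ∑_b L^(h)_{ab} ≤ 2. -/
private lemma decomp_aux (n K : ℕ) :
    ∀ (S : ℕ) (L : Matrix (Fin n) (Fin n) ℕ),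
    (∑ a, ∑ b, L a b) ≤ S →
    (∀ a b, L a b = L b a) → (∀ a, L a a = 0) → (∀ a, ∑ b, L a b ≤ K) →
    ∃ M : Fin K → Matrix (Fin n) (Fin n) ℕ,
      (∀ h a b, M h a b = M h b a) ∧
      (∀ a b, ∑ h, M h a b = L a b) ∧
      (∀ h a, (∑ b, M h a b) ≤ 2) := by
  intro S
  induction S with
  | zero =>
    intro L hS hsym hdiag hrow
    have hL0 : ∀ a b, L a b = 0 := by
      intro a b
      have h1 : ∑ b, L a b ≤ ∑ a, ∑ b, L a b :=
        Finset.single_le_sum (f := fun a => ∑ b, L a b) (fun i _ => Nat.zero_le _)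
          (Finset.mem_univ a)
      have h2 : L a b ≤ ∑ b, L a b :=
        Finset.single_le_sum (fun i _ => Nat.zero_le _) (Finset.mem_univ b)
      omega
    exact ⟨fun _ => 0, fun _ _ _ => rfl, fun a b => by simp [hL0], fun _ _ => by simp⟩
  | succ S ih =>
    intro L hS hsym hdiag hrow
    by_cases h0 : ∀ a b, L a b = 0
    · exact ⟨fun _ => 0, fun _ _ _ => rfl, fun a b => by simp [h0], fun _ _ => by simp⟩
    push_neg at h0
    obtain ⟨a, b, hab⟩ := h0
    have hne : a ≠ b := by rintro rfl; exact hab (hdiag a)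
    have hpos : 0 < L a b := Nat.pos_of_ne_zero hab
    have hba : 0 < L b a := by rw [← hsym]; exact hpos
    set E : Matrix (Fin n) (Fin n) ℕ :=
      fun x y => if (x = a ∧ y = b) ∨ (x = b ∧ y = a) then 1 else 0 with hE
    have hEle : ∀ x y, E x y ≤ L x y := by
      intro x y
      by_cases hc : (x = a ∧ y = b) ∨ (x = b ∧ y = a)
      · rcases hc with ⟨rfl, rfl⟩ | ⟨rfl, rfl⟩ <;> simp [hE, hne, hne.symm] <;> omega
      · simp [hE, hc]
    have hEsym : ∀ x y, E x y = E y x := by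
      intro x y
      simp only [hE]
      exact if_congr (by tauto) rfl rfl
    set L' : Matrix (Fin n) (Fin n) ℕ := fun x y => L x y - E x y with hL'
    have hL'add : ∀ x y, L' x y + E x y = L x y := fun x y => Nat.sub_add_cancel (hEle x y)
    have hrowadd : ∀ x, (∑ y, L' x y) + (∑ y, E x y) = ∑ y, L x y := by
      intro x
      rw [← Finset.sum_add_distrib]
      exact Finset.sum_congr rfl (fun y _ => hL'add x y)
    have hErow_a : ∑ y, E a y = 1 := by
      have h1 : ∀ y, E a y = if y = b then 1 else 0 := by
        intro y
        by_cases hy : y = b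
        · simp [hE, hy]
        · simp [hE, hy, hne]
      simp [h1]
    have hErow_b : ∑ y, E b y = 1 := by
      have h1 : ∀ y, E b y = if y = a then 1 else 0 := by
        intro y
        by_cases hy : y = a
        · simp [hE, hy, hne.symm]
        · simp [hE, hy, hne.symm]
      simp [h1]
    have hErow0 : ∀ x, x ≠ a → x ≠ b → ∑ y, E x y = 0 := by
      intro x hxa hxb
      apply Finset.sum_eq_zero
      intro y _
      simp [hE, hxa, hxb]
    have hStot : (∑ x, ∑ y, L' x y) + (∑ x, ∑ y, E x y) = ∑ x, ∑ y, L x y := by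
      rw [← Finset.sum_add_distrib]
      exact Finset.sum_congr rfl (fun x _ => hrowadd x)
    have hEtot : 2 ≤ ∑ x, ∑ y, E x y := by
      have h2 : (∑ y, E a y) + (∑ y, E b y) ≤ ∑ x, ∑ y, E x y := by
        have h3 : ∑ x ∈ ({a, b} : Finset (Fin n)), ∑ y, E x y ≤ ∑ x, ∑ y, E x y :=
          Finset.sum_le_sum_of_subset (Finset.subset_univ _)
        rwa [Finset.sum_pair hne] at h3
      omega
    have hS' : (∑ x, ∑ y, L' x y) ≤ S := by omega
    have hsym' : ∀ x y, L' x y = L' y x := by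
      intro x y; simp only [hL']; rw [hsym x y, hEsym x y]
    have hdiag' : ∀ x, L' x x = 0 := by
      intro x; simp only [hL']
      have := hdiag x
      omega
    have hrow' : ∀ x, ∑ y, L' x y ≤ K := by
      intro x
      have := hrowadd x
      have := hrow x
      omega
    obtain ⟨M, hMsym, hMsum, hMrow⟩ := ih L' hS' hsym' hdiag' hrow'
    have hKpos : 0 < K := by
      have h2 : L a b ≤ ∑ y, L a y :=
        Finset.single_le_sum (fun i _ => Nat.zero_le _) (Finset.mem_univ b)
      have := hrow a
      omega
    have hdegA : ∑ h, ∑ c, M h a c ≤ K - 1 := by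
      have h1 : ∑ h, ∑ c, M h a c = ∑ c, L' a c := by
        rw [Finset.sum_comm]
        exact Finset.sum_congr rfl (fun c _ => hMsum a c)
      have := hrowadd a
      have := hrow a
      omega
    have hdegB : ∑ h, ∑ c, M h b c ≤ K - 1 := by
      have h1 : ∑ h, ∑ c, M h b c = ∑ c, L' b c := by
        rw [Finset.sum_comm]
        exact Finset.sum_congr rfl (fun c _ => hMsum b c)
      have := hrowadd b
      have := hrow b
      omega
    have hex : ∃ h, (∑ c, M h a c ≤ 1) ∧ (∑ c, M h b c ≤ 1) := by
      by_contra hc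
      push_neg at hc
      have hge : ∀ h : Fin K, 2 ≤ (∑ c, M h a c) + (∑ c, M h b c) := by
        intro h
        by_cases h1 : ∑ c, M h a c ≤ 1
        · have := hc h h1; omega
        · omega
      have hsum2 : (∑ _h : Fin K, 2) ≤ ∑ h, ((∑ c, M h a c) + (∑ c, M h b c)) :=
        Finset.sum_le_sum (fun h _ => hge h)
      rw [Finset.sum_add_distrib] at hsum2
      simp [Finset.sum_const, Finset.card_univ] at hsum2
      omega
    obtain ⟨h, hha, hhb⟩ := hex
    refine ⟨fun h' x y => M h' x y + if h' = h then E x y else 0, ?_, ?_, ?_⟩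
    · intro h' x y
      show M h' x y + (if h' = h then E x y else 0) = M h' y x + (if h' = h then E y x else 0)
      rw [hMsym h' x y, hEsym x y]
    · intro x y
      show (∑ h', (M h' x y + if h' = h then E x y else 0)) = L x y
      rw [Finset.sum_add_distrib, hMsum]
      have h4 : (∑ h' : Fin K, if h' = h then E x y else 0) = E x y := by simp
      rw [h4]
      exact hL'add x y
    · intro h' x
      show (∑ c, (M h' x c + if h' = h then E x c else 0)) ≤ 2
      rw [Finset.sum_add_distrib]
      by_cases hh : h' = h
      · subst hh
        rw [Finset.sum_congr rfl (fun c _ => if_pos rfl)]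
        have hEs : Finset.univ.sum (E x) = ∑ y, E x y := rfl
        by_cases hxa : x = a
        · subst hxa
          omega
        · by_cases hxb : x = b
          · subst hxb
            omega
          · have := hErow0 x hxa hxb
            have := hMrow h' x
            omega
      · rw [Finset.sum_congr rfl (fun c _ => if_neg hh), Finset.sum_const_zero, add_zero]
        exact hMrow h' x

/-- Contention at most 2 when τ = 1 (remark after Theorem 4). -/
theorem contention_at_most_two_tau1 (n K : ℕ) (hK : 0 < K) (hKeven : Even K)
    (L : Matrix (Fin n) (Fin n) ℕ)
    (hsym : ∀ a b, L a b = L b a) (hdiag : ∀ a, L a a = 0)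
    (hrow : ∀ a, ∑ b, L a b ≤ K) :
    ∃ M : Fin K → Matrix (Fin n) (Fin n) ℕ,
      (∀ h a b, M h a b = M h b a) ∧
      (∀ a b, ∑ h, M h a b = L a b) ∧
      (∀ h a, (∑ b, M h a b) ≤ 2) := by
  exact decomp_aux n K (∑ a, ∑ b, L a b) L le_rfl hsym hdiag hrow
end
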